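/- arXiv:1201.3529 — 7 statements merged into one kernel-verified Lean document; each statement's English description precedes it below -/
import Mathlib

section
/- For n ∈ ℕ, the number of distinct nilpotent semigroups of degree 3 on the set {1,2,…,n} equals Σ_{m=2}^{a(n)} C(n,m) · m · Σ_{i=0}^{m-1} (−1)^i C(m−1,i) (m−i)^{(n−m)²}, where a(n) = ⌊n + 1/2 − √(n − 3/4)⌋. -/
open Finset

lemma coverCount {γ β : Type*} [Fintype γ] [DecidableEq γ] [Fintype β] [DecidableEq β]
    (s : Finset γ) (t : Finset β) (z : β) (hz : z ∈ t) :
    (((Fintype.piFinset fun c => if c ∈ s then t else {z}).filter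
        (fun h => t.erase z ⊆ s.image h)).card : ℤ) =
      ∑ i ∈ Finset.range t.card,
        (-1 : ℤ) ^ i * ((t.card - 1).choose i : ℤ) * ((t.card : ℤ) - i) ^ s.card := by
  classical
  rw [Finset.card_filter]
  push_cast
  have step1 : ∀ h : γ → β,
      ((if t.erase z ⊆ s.image h then 1 else 0 : ℤ)) =
        ∑ T ∈ ((t.erase z) \ (s.image h)).powerset, (-1 : ℤ) ^ T.card := by
    intro h
    rw [Finset.sum_powerset_neg_one_pow_card]
    simp [Finset.sdiff_eq_empty_iff_subset]
  rw [Finset.sum_congr rfl fun h _ => step1 h]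
  have step2 : ∀ h : γ → β,
      (∑ T ∈ ((t.erase z) \ (s.image h)).powerset, (-1 : ℤ) ^ T.card) =
        ∑ T ∈ (t.erase z).powerset, if Disjoint T (s.image h) then (-1 : ℤ) ^ T.card else 0 := by
    intro h
    rw [Finset.sum_ite, Finset.sum_const, smul_zero, add_zero]
    congr 1
    ext T
    simp [Finset.mem_powerset, Finset.subset_sdiff, Finset.mem_filter, and_comm]
  rw [Finset.sum_congr rfl fun h _ => step2 h]
  rw [Finset.sum_comm]
  have step3 : ∀ T ∈ (t.erase z).powerset,
      (∑ h ∈ Fintype.piFinset fun c => if c ∈ s then t else {z},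
        if Disjoint T (s.image h) then (-1 : ℤ) ^ T.card else 0) =
      (-1 : ℤ) ^ T.card * ((t.card : ℤ) - T.card) ^ s.card := by
    intro T hT
    rw [Finset.mem_powerset] at hT
    have hzT : z ∉ T := fun hc => (Finset.notMem_erase z t) (hT hc)
    have hTt : T ⊆ t := hT.trans (Finset.erase_subset _ _)
    rw [Finset.sum_ite, Finset.sum_const, Finset.sum_const, smul_zero, add_zero]
    have hset : ((Fintype.piFinset fun c => if c ∈ s then t else {z}).filter
        (fun h => Disjoint T (s.image h))) =
        Fintype.piFinset fun c => if c ∈ s then t \ T else {z} := by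
      ext h
      simp only [Finset.mem_filter, Fintype.mem_piFinset]
      constructor
      · rintro ⟨h1, h2⟩ c
        by_cases hc : c ∈ s
        · simp only [hc, if_true, Finset.mem_sdiff]
          refine ⟨by simpa [hc] using h1 c, ?_⟩
          intro hcT
          exact (Finset.disjoint_right.1 h2) (Finset.mem_image_of_mem h hc) hcT
        · simpa [hc] using h1 c
      · intro h1
        constructor
        · intro c
          by_cases hc : c ∈ s
          · have := h1 c; simp only [hc, if_true, Finset.mem_sdiff] at this ⊢; exact this.1
          · simpa [hc] using h1 c
        · rw [Finset.disjoint_right]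
          rintro a ha hc
          rw [Finset.mem_image] at ha
          obtain ⟨c, hcs, rfl⟩ := ha
          have := h1 c
          simp only [hcs, if_true, Finset.mem_sdiff] at this
          exact this.2 hc
    rw [hset, Fintype.card_piFinset]
    have hprod : (∏ c : γ, ((if c ∈ s then t \ T else {z}).card)) = (t.card - T.card) ^ s.card := by
      have : ∀ c : γ, ((if c ∈ s then t \ T else {z}).card) =
          (if c ∈ s then t.card - T.card else 1) := by
        intro c; by_cases hc : c ∈ s <;> simp [hc, Finset.card_sdiff_of_subset hTt]
      rw [Finset.prod_congr rfl (fun c _ => this c), Finset.prod_ite_mem,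
        Finset.univ_inter, Finset.prod_const]
    rw [hprod, nsmul_eq_mul]
    push_cast [Nat.cast_sub (Finset.card_le_card hTt)]
    ring
  rw [Finset.sum_congr rfl step3]
  rw [Finset.sum_powerset]
  have hcard : (t.erase z).card = t.card - 1 := Finset.card_erase_of_mem hz
  have ht1 : 1 ≤ t.card := Finset.card_pos.2 ⟨z, hz⟩
  rw [hcard]
  have : t.card - 1 + 1 = t.card := Nat.succ_pred_eq_of_pos ht1
  rw [this]
  refine Finset.sum_congr rfl fun i hi => ?_
  have : ∀ T ∈ Finset.powersetCard i (t.erase z),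
      (-1 : ℤ) ^ T.card * ((t.card : ℤ) - T.card) ^ s.card =
      (-1 : ℤ) ^ i * ((t.card : ℤ) - i) ^ s.card := by
    intro T hT
    rw [(Finset.mem_powersetCard.1 hT).2]
  rw [Finset.sum_congr rfl this, Finset.sum_const, Finset.card_powersetCard, hcard]
  ring

open Finset

section Aux

variable {n : ℕ}

/-- the nilpotency predicate -/
def IsNil3 (n : ℕ) (f : Fin n → Fin n → Fin n) : Prop :=
  (∀ x y w, f (f x y) w = f x (f y w)) ∧
  ∃ z : Fin n, (∀ t, f z t = z ∧ f t z = z) ∧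
    (∀ x y w, f (f x y) w = z) ∧ (∃ x y, f x y ≠ z)

lemma zero_unique {f : Fin n → Fin n → Fin n} {z z' : Fin n}
    (hz : ∀ t, f z t = z ∧ f t z = z) (hz' : ∀ t, f z' t = z' ∧ f t z' = z') : z = z' :=
  ((hz z').1).symm.trans (hz' z).2

noncomputable def zOf (hn : 0 < n) (f : Fin n → Fin n → Fin n) : Fin n :=
  if h : ∃ z : Fin n, ∀ t, f z t = z ∧ f t z = z then h.choose else ⟨0, hn⟩

lemma zOf_eq (hn : 0 < n) {f : Fin n → Fin n → Fin n} {z : Fin n}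
    (hz : ∀ t, f z t = z ∧ f t z = z) : zOf hn f = z := by
  have h : ∃ z : Fin n, ∀ t, f z t = z ∧ f t z = z := ⟨z, hz⟩
  rw [zOf, dif_pos h]
  exact zero_unique h.choose_spec hz

noncomputable def tauOf (hn : 0 < n) (f : Fin n → Fin n → Fin n) :
    Fin n × Finset (Fin n) :=
  (zOf hn f, insert (zOf hn f) (Finset.image₂ f Finset.univ Finset.univ))

lemma mem_fiber_iff (hn : 0 < n) (z : Fin n) (B : Finset (Fin n))
    (f : Fin n → Fin n → Fin n) :
    (IsNil3 n f ∧ tauOf hn f = (z, B)) ↔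
      z ∈ B ∧ 2 ≤ B.card ∧
      (∀ c : Fin n × Fin n, f c.1 c.2 ∈ (if c ∈ Bᶜ ×ˢ Bᶜ then B else ({z} : Finset (Fin n)))) ∧
      B.erase z ⊆ (Bᶜ ×ˢ Bᶜ).image (fun c => f c.1 c.2) := by
  classical
  constructor
  · rintro ⟨⟨hassoc, z₀, hz₀, htrip, x₀, y₀, hne⟩, htau⟩
    have hz : zOf hn f = z₀ := zOf_eq hn hz₀
    have hzz : z = z₀ := by
      have := congrArg Prod.fst htau
      simp [tauOf, hz] at this; exact this.symm
    subst hzz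
    have hB : B = insert z (Finset.image₂ f Finset.univ Finset.univ) := by
      have := congrArg Prod.snd htau
      simp [tauOf, hz] at this; exact this.symm
    have himB : ∀ x y : Fin n, f x y ∈ B := by
      intro x y; rw [hB]; exact Finset.mem_insert_of_mem
        (Finset.mem_image₂_of_mem (Finset.mem_univ x) (Finset.mem_univ y))
    have hzB : z ∈ B := hB ▸ Finset.mem_insert_self _ _
    -- key: if x ∈ B or y ∈ B then f x y = z
    have hkill : ∀ x y : Fin n, (x ∈ B ∨ y ∈ B) → f x y = z := by
      rintro x y (hx | hy)
      · rw [hB, Finset.mem_insert] at hx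
        rcases hx with rfl | hx
        · exact (hz₀ y).1
        · rw [Finset.mem_image₂] at hx
          obtain ⟨a, -, b, -, rfl⟩ := hx
          exact htrip a b y
      · rw [hB, Finset.mem_insert] at hy
        rcases hy with rfl | hy
        · exact (hz₀ x).2
        · rw [Finset.mem_image₂] at hy
          obtain ⟨a, -, b, -, rfl⟩ := hy
          rw [← hassoc]
          exact htrip x a b
    refine ⟨hzB, ?_, ?_, ?_⟩
    · exact Finset.one_lt_card_iff.2 ⟨f x₀ y₀, z, himB x₀ y₀, hzB, hne⟩
    · intro c
      by_cases hc : c ∈ Bᶜ ×ˢ Bᶜ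
      · simpa [hc] using himB c.1 c.2
      · simp only [hc, if_false, Finset.mem_singleton]
        rw [Finset.mem_product, Finset.mem_compl, Finset.mem_compl] at hc
        apply hkill
        by_contra h
        push_neg at h
        exact hc ⟨h.1, h.2⟩
    · intro b hb
      rw [Finset.mem_erase] at hb
      obtain ⟨hbz, hbB⟩ := hb
      rw [hB, Finset.mem_insert] at hbB
      rcases hbB with rfl | hbB
      · exact absurd rfl hbz
      · rw [Finset.mem_image₂] at hbB
        obtain ⟨a, -, c, -, rfl⟩ := hbB
        rw [Finset.mem_image]
        refine ⟨(a, c), ?_, rfl⟩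
        rw [Finset.mem_product, Finset.mem_compl, Finset.mem_compl]
        constructor
        · intro haB; exact hbz (hkill a c (Or.inl haB))
        · intro hcB; exact hbz (hkill a c (Or.inr hcB))
  · rintro ⟨hzB, h2, hpt, hcov⟩
    have hkill : ∀ x y : Fin n, (x ∈ B ∨ y ∈ B) → f x y = z := by
      intro x y hxy
      have := hpt (x, y)
      have hns : (x, y) ∉ Bᶜ ×ˢ Bᶜ := by
        rw [Finset.mem_product, Finset.mem_compl, Finset.mem_compl]
        rintro ⟨h1, h2⟩
        rcases hxy with h | h
        · exact h1 h
        · exact h2 h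
      simpa [hns] using this
    have himB : ∀ x y : Fin n, f x y ∈ B := by
      intro x y
      have := hpt (x, y)
      by_cases hc : (x, y) ∈ Bᶜ ×ˢ Bᶜ
      · simpa [hc] using this
      · simp only [hc, if_false, Finset.mem_singleton] at this
        rw [this]; exact hzB
    have hzero : ∀ t, f z t = z ∧ f t z = z := fun t =>
      ⟨hkill z t (Or.inl hzB), hkill t z (Or.inr hzB)⟩
    have htrip : ∀ x y w, f (f x y) w = z := fun x y w =>
      hkill (f x y) w (Or.inl (himB x y))
    have hassoc : ∀ x y w, f (f x y) w = f x (f y w) := by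
      intro x y w
      rw [htrip x y w, hkill x (f y w) (Or.inr (himB y w))]
    have hex : ∃ x y, f x y ≠ z := by
      obtain ⟨b, hb, hbz⟩ := Finset.exists_mem_ne h2 z
      have : b ∈ (Bᶜ ×ˢ Bᶜ).image (fun c => f c.1 c.2) :=
        hcov (Finset.mem_erase.2 ⟨hbz, hb⟩)
      rw [Finset.mem_image] at this
      obtain ⟨c, -, hc⟩ := this
      exact ⟨c.1, c.2, hc.symm ▸ hbz⟩
    refine ⟨⟨hassoc, z, hzero, htrip, hex⟩, ?_⟩
    have hz : zOf hn f = z := zOf_eq hn hzero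
    rw [tauOf, hz, Prod.mk.injEq]
    refine ⟨rfl, ?_⟩
    apply Finset.Subset.antisymm
    · intro b hb
      rw [Finset.mem_insert] at hb
      rcases hb with rfl | hb
      · exact hzB
      · rw [Finset.mem_image₂] at hb
        obtain ⟨a, -, c, -, rfl⟩ := hb
        exact himB a c
    · intro b hb
      by_cases hbz : b = z
      · subst hbz; exact Finset.mem_insert_self _ _
      · have : b ∈ (Bᶜ ×ˢ Bᶜ).image (fun c => f c.1 c.2) :=
          hcov (Finset.mem_erase.2 ⟨hbz, hb⟩)
        rw [Finset.mem_image] at this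
        obtain ⟨c, -, hc⟩ := this
        refine Finset.mem_insert_of_mem ?_
        rw [← hc]
        exact Finset.mem_image₂_of_mem (Finset.mem_univ _) (Finset.mem_univ _)

end Aux

lemma inner_vanish (m k : ℕ) (hm : 1 ≤ m) (hk : k + 1 < m) :
    ∑ i ∈ Finset.range m, (-1:ℤ)^i * ((m-1).choose i : ℤ) * ((m:ℤ) - i)^k = 0 := by
  classical
  have hz : (⟨0, by omega⟩ : Fin m) ∈ (Finset.univ : Finset (Fin m)) := Finset.mem_univ _
  have h := coverCount (Finset.univ : Finset (Fin k)) (Finset.univ : Finset (Fin m)) _ hz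
  rw [Finset.card_univ, Finset.card_univ, Fintype.card_fin, Fintype.card_fin] at h
  rw [← h]
  norm_cast
  rw [Finset.card_eq_zero, Finset.eq_empty_iff_forall_notMem]
  intro f hf
  rw [Finset.mem_filter] at hf
  have hcov := hf.2
  have h1 : (Finset.univ.erase (⟨0, by omega⟩ : Fin m)).card ≤
      ((Finset.univ : Finset (Fin k)).image f).card := Finset.card_le_card hcov
  have h2 : ((Finset.univ : Finset (Fin k)).image f).card ≤ k := by
    refine le_trans (Finset.card_image_le) ?_
    rw [Finset.card_univ, Fintype.card_fin]
  rw [Finset.card_erase_of_mem (Finset.mem_univ _), Finset.card_univ, Fintype.card_fin] at h1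
  omega

lemma sum_card_group {α : Type*} [Fintype α] [DecidableEq α] (G : ℕ → ℤ) :
    ∑ B : Finset α, G B.card =
      ∑ j ∈ Finset.range (Fintype.card α + 1), ((Fintype.card α).choose j : ℤ) * G j := by
  rw [← Finset.powerset_univ, Finset.sum_powerset, Finset.card_univ]
  refine Finset.sum_congr rfl fun j hj => ?_
  have h := Finset.sum_powersetCard j (Finset.univ : Finset α) G
  rw [Finset.card_univ] at h
  rw [h, nsmul_eq_mul]

lemma count_eq {n : ℕ} (hn : 0 < n) :
    (Nat.card {f : Fin n → Fin n → Fin n // IsNil3 n f} : ℤ) =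
      ∑ m ∈ Finset.Icc 2 n, (n.choose m : ℤ) * m *
        ∑ i ∈ Finset.range m,
          (-1 : ℤ) ^ i * ((m - 1).choose i : ℤ) * ((m : ℤ) - (i : ℤ)) ^ ((n - m) ^ 2) := by
  classical
  rw [Nat.card_eq_fintype_card, Fintype.card_subtype]
  rw [Finset.card_eq_sum_card_fiberwise
    (f := tauOf hn) (t := Finset.univ) (fun f _ => Finset.mem_univ _)]
  push_cast
  -- fiber cards
  have key : ∀ p : Fin n × Finset (Fin n),
      (((Finset.univ.filter (IsNil3 n)).filter (fun f => tauOf hn f = p)).card : ℤ) =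
      if p.1 ∈ p.2 ∧ 2 ≤ p.2.card then
        ∑ i ∈ Finset.range p.2.card,
          (-1 : ℤ) ^ i * ((p.2.card - 1).choose i : ℤ) *
            ((p.2.card : ℤ) - i) ^ ((n - p.2.card) ^ 2)
      else 0 := by
    rintro ⟨z, B⟩
    simp only
    split_ifs with hgood
    · obtain ⟨hzB, h2B⟩ := hgood
      have hscard : ((Bᶜ ×ˢ Bᶜ : Finset (Fin n × Fin n))).card = (n - B.card) ^ 2 := by
        rw [Finset.card_product, Finset.card_compl, Fintype.card_fin, sq]
      rw [← hscard, ← coverCount (Bᶜ ×ˢ Bᶜ) B z hzB]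
      congr 1
      apply Finset.card_bij' (fun f _ => fun c : Fin n × Fin n => f c.1 c.2)
        (fun h _ => fun x y => h (x, y))
      · intro f hf
        rw [Finset.mem_filter, Finset.mem_filter] at hf
        have := (mem_fiber_iff hn z B f).1 ⟨hf.1.2, hf.2⟩
        rw [Finset.mem_filter, Fintype.mem_piFinset]
        exact ⟨this.2.2.1, this.2.2.2⟩
      · intro h hh
        rw [Finset.mem_filter, Fintype.mem_piFinset] at hh
        rw [Finset.mem_filter, Finset.mem_filter]
        have hconv : (fun c : Fin n × Fin n => h (c.1, c.2)) = h := by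
          funext c; rw [Prod.mk.eta]
        have := (mem_fiber_iff hn z B (fun x y => h (x, y))).2
          ⟨hzB, h2B, by simpa [hconv] using hh.1, by simpa [hconv] using hh.2⟩
        exact ⟨⟨Finset.mem_univ _, this.1⟩, this.2⟩
      · intro f _; rfl
      · intro h _; funext c; show h (c.1, c.2) = h c; rw [Prod.mk.eta]
    · rw [Nat.cast_eq_zero, Finset.card_eq_zero, Finset.eq_empty_iff_forall_notMem]
      intro f hf
      rw [Finset.mem_filter, Finset.mem_filter] at hf
      have := (mem_fiber_iff hn z B f).1 ⟨hf.1.2, hf.2⟩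
      exact hgood ⟨this.1, this.2.1⟩
  rw [Finset.sum_congr rfl (fun p _ => key p)]
  rw [Fintype.sum_prod_type]
  -- inner sum over z
  have step : ∀ B : Finset (Fin n),
      (∑ z : Fin n, if z ∈ B ∧ 2 ≤ B.card then
        ∑ i ∈ Finset.range B.card,
          (-1 : ℤ) ^ i * ((B.card - 1).choose i : ℤ) *
            ((B.card : ℤ) - i) ^ ((n - B.card) ^ 2)
      else 0) =
      (fun m : ℕ => if 2 ≤ m then (m : ℤ) *
        ∑ i ∈ Finset.range m,
          (-1 : ℤ) ^ i * ((m - 1).choose i : ℤ) * ((m : ℤ) - i) ^ ((n - m) ^ 2)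
      else 0) B.card := by
    intro B
    simp only
    by_cases h2 : 2 ≤ B.card
    · simp only [h2, and_true, if_true]
      rw [Finset.sum_ite_mem, Finset.univ_inter, Finset.sum_const, nsmul_eq_mul]
    · simp [h2]
  rw [Finset.sum_comm, Finset.sum_congr rfl (fun B _ => step B)]
  rw [sum_card_group (fun m : ℕ => if 2 ≤ m then (m : ℤ) *
        ∑ i ∈ Finset.range m,
          (-1 : ℤ) ^ i * ((m - 1).choose i : ℤ) * ((m : ℤ) - i) ^ ((n - m) ^ 2)
      else 0)]
  rw [Fintype.card_fin]
  have hIcc : Finset.Icc 2 n = (Finset.range (n + 1)).filter (fun j => 2 ≤ j) := by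
    ext a; simp only [Finset.mem_filter, Finset.mem_range, Finset.mem_Icc, Nat.lt_succ_iff]; omega
  rw [hIcc, Finset.sum_filter]
  refine Finset.sum_congr rfl fun j hj => ?_
  by_cases hj2 : 2 ≤ j
  · simp only [hj2, if_true]; ring
  · simp [hj2]

/-- The number of distinct nilpotent semigroups of degree 3 on {1,…,n}. -/
theorem stmt5 (n : ℕ) :
    (Nat.card {f : Fin n → Fin n → Fin n //
        (∀ x y w, f (f x y) w = f x (f y w)) ∧
        ∃ z : Fin n, (∀ t, f z t = z ∧ f t z = z) ∧
          (∀ x y w, f (f x y) w = z) ∧ (∃ x y, f x y ≠ z)} : ℤ) =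
    ∑ m ∈ Finset.Icc 2 (⌊(n : ℝ) + 1/2 - Real.sqrt ((n : ℝ) - 3/4)⌋₊),
      (n.choose m : ℤ) * m *
        ∑ i ∈ Finset.range m,
          (-1 : ℤ) ^ i * ((m - 1).choose i : ℤ) * ((m : ℤ) - (i : ℤ)) ^ ((n - m) ^ 2) := by
  rcases Nat.eq_zero_or_pos n with rfl | hn
  · -- n = 0
    have h1 : IsEmpty {f : Fin 0 → Fin 0 → Fin 0 //
        (∀ x y w, f (f x y) w = f x (f y w)) ∧
        ∃ z : Fin 0, (∀ t, f z t = z ∧ f t z = z) ∧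
          (∀ x y w, f (f x y) w = z) ∧ (∃ x y, f x y ≠ z)} := by
      constructor
      rintro ⟨f, -, z, -⟩
      exact Fin.elim0 z
    rw [Nat.card_of_isEmpty]
    have hs : Real.sqrt ((0 : ℕ) - 3/4) = 0 := by
      rw [Real.sqrt_eq_zero']
      norm_num
    have hf : ⌊((0 : ℕ) : ℝ) + 1/2 - Real.sqrt (((0 : ℕ) : ℝ) - 3/4)⌋₊ = 0 := by
      rw [Nat.floor_eq_zero]
      rw [show (((0:ℕ):ℝ) - 3/4) = ((0:ℕ):ℝ) - 3/4 from rfl] at hs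
      rw [hs]
      norm_num
    rw [hf]
    rw [Finset.Icc_eq_empty (by omega), Finset.sum_empty, Nat.cast_zero]
  · -- n ≥ 1
    have hmain : (Nat.card {f : Fin n → Fin n → Fin n //
        (∀ x y w, f (f x y) w = f x (f y w)) ∧
        ∃ z : Fin n, (∀ t, f z t = z ∧ f t z = z) ∧
          (∀ x y w, f (f x y) w = z) ∧ (∃ x y, f x y ≠ z)} : ℤ) =
        (Nat.card {f : Fin n → Fin n → Fin n // IsNil3 n f} : ℤ) := rfl
    rw [hmain, count_eq hn]
    set a := ⌊(n : ℝ) + 1/2 - Real.sqrt ((n : ℝ) - 3/4)⌋₊ with ha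
    have hn34 : (0 : ℝ) ≤ (n : ℝ) - 3/4 := by
      have : (1 : ℝ) ≤ (n : ℝ) := by exact_mod_cast hn
      linarith
    have han : a ≤ n := by
      have hx : (n : ℝ) + 1/2 - Real.sqrt ((n : ℝ) - 3/4) ≤ (n : ℝ) := by
        have h14 : (1/2 : ℝ) = Real.sqrt (1/4) := by
          rw [show (1/4 : ℝ) = (1/2)^2 by norm_num, Real.sqrt_sq (by norm_num)]
        have : Real.sqrt (1/4) ≤ Real.sqrt ((n : ℝ) - 3/4) := by
          apply Real.sqrt_le_sqrt
          have : (1 : ℝ) ≤ (n : ℝ) := by exact_mod_cast hn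
          linarith
        linarith [h14 ▸ this]
      calc a ≤ ⌊(n : ℝ)⌋₊ := Nat.floor_mono hx
        _ = n := Nat.floor_natCast n
    symm
    apply Finset.sum_subset (Finset.Icc_subset_Icc_right han)
    intro m hm hma
    rw [Finset.mem_Icc] at hm hma
    push_neg at hma
    have ham : a < m := hma hm.1
    obtain ⟨hm2, hmn⟩ := hm
    -- derive (n-m)^2 + 1 < m
    have hxm : (n : ℝ) + 1/2 - Real.sqrt ((n : ℝ) - 3/4) < m := Nat.lt_of_floor_lt ham
    have hr : ((n - m : ℕ) : ℝ) = (n : ℝ) - m := by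
      push_cast [Nat.cast_sub hmn]; ring
    have hsle : (n : ℝ) - m + 1/2 < Real.sqrt ((n : ℝ) - 3/4) := by linarith
    have h0 : (0 : ℝ) ≤ (n : ℝ) - m + 1/2 := by
      have : (m : ℝ) ≤ (n : ℝ) := by exact_mod_cast hmn
      linarith
    have hsq : ((n : ℝ) - m + 1/2)^2 < (n : ℝ) - 3/4 := by
      have h2 := Real.sq_sqrt hn34
      nlinarith [Real.sqrt_nonneg ((n : ℝ) - 3/4)]
    have hkey : ((n : ℝ) - m)^2 < (m : ℝ) - 1 := by nlinarith
    have hnat : (n - m)^2 + 1 < m := by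
      have h1 : (((n - m)^2 : ℕ) : ℝ) < (m : ℝ) - 1 := by
        push_cast
        rw [hr]
        exact hkey
      have h2 : (((n - m)^2 + 1 : ℕ) : ℝ) < (m : ℝ) := by push_cast at h1 ⊢; linarith
      exact_mod_cast h2
    have hv := inner_vanish m ((n - m)^2) (le_trans one_le_two hm2) hnat
    rw [hv, mul_zero]
end

section
/- For n ∈ ℕ, the number of distinct commutative nilpotent semigroups of degree 3 on the set {1,2,…,n} equals Σ_{m=2}^{c(n)} C(n,m) · m · Σ_{i=0}^{m-1} (−1)^i C(m−1,i) (m−i)^{(n−m)(n−m+1)/2}, where c(n) = ⌊n + 3/2 − √(2n + 1/4)⌋. -/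
/-!
In a commutative semigroup `S` with zero `z` in which all triple products vanish, the set of
products `A = S²` satisfies `A · S = {z}`. The multiplication is therefore determined by a
symmetric map from pairs of elements of `S \ A` to `A` whose image covers `A \ {z}`, and
conversely every such map defines a semigroup of this kind. With `|S| = n`, `|A| = m` and
`k = n - m` there are `k(k+1)/2` unordered pairs, so inclusion–exclusion counts the maps, and
`n.choose m * m` counts the choices of `A` and `z`; the requirement `m ≥ 2` is the existence of
a nonzero product. A covering needs `m - 1 ≤ k(k+1)/2`, which for `m ≥ 2` is exactly
`m ≤ ⌊n + 3/2 - √(2n + 1/4)⌋`; beyond that bound the alternating sums vanish.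
-/

open Finset

section CoveringMaps

variable {X β : Type*} [Fintype X] [DecidableEq X] [Fintype β] [DecidableEq β]

theorem card_covering_maps (s : Finset β) :
    (#{g : X → β | ∀ b ∈ s, ∃ x, g x = b} : ℤ) =
      ∑ i ∈ range (#s + 1),
        (-1) ^ i * ((#s).choose i : ℤ) * ((Fintype.card β : ℤ) - i) ^ Fintype.card X := by
  classical
  have hcover : s.inf (fun b ↦ ({g : X → β | ∀ x, g x ≠ b} : Finset _)ᶜ) =
      ({g | ∀ b ∈ s, ∃ x, g x = b} : Finset (X → β)) := by
    ext g
    simp [mem_inf]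
  have hmiss (t : Finset β) :
      t.inf (fun b ↦ ({g : X → β | ∀ x, g x ≠ b} : Finset _)) = Fintype.piFinset fun _ ↦ tᶜ := by
    ext g
    simp only [mem_inf, mem_filter, mem_univ, true_and, Fintype.mem_piFinset, mem_compl]
    exact ⟨fun h x hx ↦ h _ hx x rfl, fun h i hi x hx ↦ h x (hx ▸ hi)⟩
  rw [← hcover, inclusion_exclusion_card_inf_compl]
  simp_rw [hmiss, Fintype.card_piFinset, prod_const, card_univ, card_compl, Nat.cast_pow,
    Nat.cast_sub (card_le_univ _)]
  rw [sum_powerset_apply_card fun i ↦ (-1 : ℤ) ^ i * ((Fintype.card β : ℤ) - i) ^ Fintype.card X]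
  refine sum_congr rfl fun i _ ↦ ?_
  rw [nsmul_eq_mul]
  ring

end CoveringMaps

theorem sum_alternating_choose_pow_eq_zero {m K : ℕ} (hK : K < m - 1) :
    ∑ i ∈ range m, (-1 : ℤ) ^ i * ((m - 1).choose i : ℤ) * ((m : ℤ) - i) ^ K = 0 := by
  -- The sum counts the maps `Fin K → Fin m` hitting all of `Fin m` but `0`; there are none.
  have hm : 0 < m := by omega
  have hcard : #((univ : Finset (Fin m)).erase ⟨0, hm⟩) = m - 1 := by simp
  have key := card_covering_maps (X := Fin K) ((univ : Finset (Fin m)).erase ⟨0, hm⟩)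
  rw [hcard, Nat.sub_add_cancel hm, Fintype.card_fin, Fintype.card_fin] at key
  rw [← key, Nat.cast_eq_zero, card_eq_zero]
  refine eq_empty_of_forall_notMem fun g hg ↦ ?_
  simp only [mem_filter] at hg
  have : m - 1 ≤ K := calc
    m - 1 = #((univ : Finset (Fin m)).erase ⟨0, hm⟩) := hcard.symm
    _ ≤ #(univ.image g) := card_le_card fun b hb ↦ by
        obtain ⟨x, rfl⟩ := hg.2 b hb
        exact mem_image_of_mem g (mem_univ x)
    _ ≤ K := card_image_le.trans (by simp)
  omega

theorem le_floor_three_halves_sub_sqrt_iff {n m : ℕ} (hm : 2 ≤ m) :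
    m ≤ ⌊(n : ℝ) + 3 / 2 - √(2 * n + 1 / 4)⌋₊ ↔
      m ≤ n ∧ m - 1 ≤ (n - m) * (n - m + 1) / 2 := by
  rw [Nat.le_floor_iff' (by omega), le_sub_comm, Real.sqrt_le_iff,
    Nat.le_div_iff_mul_le two_pos]
  constructor
  · rintro ⟨hpos, hsq⟩
    have hmn : m ≤ n := by
      by_contra! hnm
      have hm' : m < n + 2 := by exact_mod_cast (by linarith : (m : ℝ) < n + 2)
      obtain rfl : m = n + 1 := by omega
      push_cast at hsq
      have : n < 1 := by exact_mod_cast (by nlinarith : (n : ℝ) < 1)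
      omega
    obtain ⟨k, rfl⟩ := Nat.exists_eq_add_of_le hmn
    refine ⟨hmn, ?_⟩
    rw [Nat.add_sub_cancel_left, ← Nat.cast_le (α := ℝ)]
    push_cast [Nat.cast_sub (by omega : 1 ≤ m)] at hsq ⊢
    nlinarith
  · rintro ⟨hmn, hK⟩
    obtain ⟨k, rfl⟩ := Nat.exists_eq_add_of_le hmn
    rw [Nat.add_sub_cancel_left, ← Nat.cast_le (α := ℝ)] at hK
    push_cast [Nat.cast_sub (by omega : 1 ≤ m)] at hK ⊢
    constructor <;> nlinarith

section NilpotentSemigroups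

variable {α : Type*}

def IsCommNilpotentOfDegreeThree (f : α → α → α) : Prop :=
  (∀ x y w, f (f x y) w = f x (f y w)) ∧ (∀ x y, f x y = f y x) ∧
    ∃ z : α, (∀ t, f z t = z ∧ f t z = z) ∧ (∀ x y w, f (f x y) w = z) ∧ ∃ x y, f x y ≠ z

/-- `A` plays the role of the set of products `S²` and `z` that of the zero. -/
def IsNilpotentWith (A : Finset α) (z : α) (f : α → α → α) : Prop :=
  (∀ x y, f x y = f y x) ∧ (∀ x y, x ∈ A ∨ y ∈ A → f x y = z) ∧ (∀ x y, f x y ∈ A) ∧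
    ∀ a ∈ A, a ≠ z → ∃ x y, f x y = a

namespace IsNilpotentWith

variable {A A' : Finset α} {z z' : α} {f : α → α → α}

theorem mem_iff (h : IsNilpotentWith A z f) (hz : z ∈ A) {a : α} :
    a ∈ A ↔ a = z ∨ ∃ x y, f x y = a := by
  constructor
  · intro ha
    by_cases haz : a = z
    · exact .inl haz
    · exact .inr (h.2.2.2 a ha haz)
  · rintro (rfl | ⟨x, y, rfl⟩)
    exacts [hz, h.2.2.1 x y]

theorem unique (h : IsNilpotentWith A z f) (h' : IsNilpotentWith A' z' f) (hz : z ∈ A)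
    (hz' : z' ∈ A') : A = A' ∧ z = z' := by
  have hzz' : z = z' := (h.2.1 z z' (.inl hz)).symm.trans (h'.2.1 z z' (.inr hz'))
  subst hzz'
  refine ⟨?_, rfl⟩
  ext a
  rw [h.mem_iff hz, h'.mem_iff hz']

end IsNilpotentWith

variable [Fintype α] [DecidableEq α]

theorem isCommNilpotentOfDegreeThree_iff {f : α → α → α} :
    IsCommNilpotentOfDegreeThree f ↔ ∃ A z, z ∈ A ∧ 2 ≤ #A ∧ IsNilpotentWith A z f := by
  constructor
  · rintro ⟨-, hcomm, z, hzero, hcube, x, y, hxy⟩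
    set A := univ.image fun p : α × α ↦ f p.1 p.2
    have hmem (u v : α) : f u v ∈ A := mem_image_of_mem _ (mem_univ (u, v))
    have hann (a : α) (ha : a ∈ A) (t : α) : f a t = z := by
      obtain ⟨⟨u, v⟩, -, rfl⟩ := mem_image.mp ha
      exact hcube u v t
    have hz : z ∈ A := (hzero z).1 ▸ hmem z z
    refine ⟨A, z, hz, one_lt_card.mpr ⟨_, hmem x y, z, hz, hxy⟩, hcomm, ?_, hmem, ?_⟩
    · rintro u v (hu | hv)
      exacts [hann u hu v, hcomm u v ▸ hann v hv u]
    · intro a ha _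
      obtain ⟨⟨u, v⟩, -, rfl⟩ := mem_image.mp ha
      exact ⟨u, v, rfl⟩
  · rintro ⟨A, z, hz, hA, h⟩
    have hcube (x y w : α) : f (f x y) w = z := h.2.1 _ _ (.inl (h.2.2.1 x y))
    obtain ⟨a, ha, haz⟩ := exists_mem_ne hA z
    obtain ⟨x, y, rfl⟩ := h.2.2.2 a ha haz
    refine ⟨fun x y w ↦ ?_, h.1, z, fun t ↦ ⟨h.2.1 z t (.inl hz), h.2.1 t z (.inr hz)⟩, hcube,
      x, y, haz⟩
    rw [hcube, h.1 x, hcube]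

def extendByZero (A : Finset α) (z : α) (g : Sym2 ↥Aᶜ → ↥A) (x y : α) : α :=
  if h : x ∉ A ∧ y ∉ A then g s(⟨x, mem_compl.2 h.1⟩, ⟨y, mem_compl.2 h.2⟩) else z

theorem extendByZero_comm (A : Finset α) (z : α) (g : Sym2 ↥Aᶜ → ↥A) (x y : α) :
    extendByZero A z g x y = extendByZero A z g y x := by
  unfold extendByZero
  by_cases h : x ∉ A ∧ y ∉ A
  · rw [dif_pos h, dif_pos h.symm, Sym2.eq_swap]
  · rw [dif_neg h, dif_neg (mt And.symm h)]

def isNilpotentWithEquiv (A : Finset α) (z : α) (hz : z ∈ A) :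
    {f // IsNilpotentWith A z f} ≃ {g : Sym2 ↥Aᶜ → ↥A // ∀ a : ↥A, (a : α) ≠ z → ∃ p, g p = a}
    where
  toFun f := ⟨Sym2.lift ⟨fun x y ↦ ⟨f.1 x y, f.2.2.2.1 x y⟩, fun x y ↦ Subtype.ext (f.2.1 x y)⟩,
    fun a ha ↦ by
      obtain ⟨x, y, hxy⟩ := f.2.2.2.2 a a.2 ha
      have hx : x ∈ Aᶜ := mem_compl.2 fun hx ↦ ha (hxy ▸ f.2.2.1 x y (.inl hx))
      have hy : y ∈ Aᶜ := mem_compl.2 fun hy ↦ ha (hxy ▸ f.2.2.1 x y (.inr hy))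
      exact ⟨s(⟨x, hx⟩, ⟨y, hy⟩), Subtype.ext hxy⟩⟩
  invFun g := ⟨extendByZero A z g.1, extendByZero_comm A z g.1,
    fun x y h ↦ dif_neg (by tauto),
    fun x y ↦ by unfold extendByZero; split <;> simp [hz],
    fun a ha haz ↦ by
      obtain ⟨p, hp⟩ := g.2 ⟨a, ha⟩ haz
      induction p using Sym2.ind with | _ x y => ?_
      refine ⟨x, y, ?_⟩
      rw [extendByZero, dif_pos ⟨mem_compl.1 x.2, mem_compl.1 y.2⟩, hp]⟩
  left_inv f := by
    ext x y
    change extendByZero A z _ x y = f.1 x y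
    unfold extendByZero
    split
    · rfl
    · exact (f.2.2.1 x y (by tauto)).symm
  right_inv g := by
    ext p : 2
    induction p using Sym2.ind with | _ x y => ?_
    simp [extendByZero, mem_compl.1 x.2, mem_compl.1 y.2]

theorem card_isNilpotentWith {A : Finset α} {z : α} (hz : z ∈ A) :
    (Nat.card {f // IsNilpotentWith A z f} : ℤ) =
      ∑ i ∈ range #A, (-1) ^ i * ((#A - 1).choose i : ℤ) * ((#A : ℤ) - i) ^
        ((Fintype.card α - #A) * (Fintype.card α - #A + 1) / 2) := by
  classical
  have key := card_covering_maps (X := Sym2 ↥Aᶜ) (univ.erase (⟨z, hz⟩ : ↥A))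
  rw [card_erase_of_mem (mem_univ _), card_univ, Fintype.card_coe,
    Nat.sub_add_cancel (card_pos.2 ⟨z, hz⟩), Sym2.card, Fintype.card_coe, card_compl,
    Nat.choose_two_right, Nat.add_sub_cancel, mul_comm] at key
  rw [← key, Nat.card_congr (isNilpotentWithEquiv A z hz), Nat.card_eq_fintype_card,
    Fintype.card_subtype]
  congr 3
  ext g
  refine forall_congr' fun a ↦ ?_
  simp only [mem_erase, mem_univ, and_true, ne_eq, ← Subtype.coe_inj]

theorem card_isCommNilpotentOfDegreeThree_eq_sum :
    Nat.card {f : α → α → α // IsCommNilpotentOfDegreeThree f} =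
      ∑ A : Finset α with 2 ≤ #A, ∑ z ∈ A, Nat.card {f // IsNilpotentWith A z f} := by
  classical
  have hunion : ({f | IsCommNilpotentOfDegreeThree f} : Finset (α → α → α)) =
      ({A : Finset α | 2 ≤ #A} : Finset _).biUnion fun A ↦
        A.biUnion fun z ↦ {f | IsNilpotentWith A z f} := by
    ext f
    simp only [mem_filter, mem_univ, true_and, mem_biUnion, isCommNilpotentOfDegreeThree_iff]
    aesop
  have hmem {A : Finset α} {f : α → α → α}
      (h : f ∈ A.biUnion fun z ↦ ({f | IsNilpotentWith A z f} : Finset _)) :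
      ∃ z ∈ A, IsNilpotentWith A z f := by
    simpa using h
  simp_rw [Nat.card_eq_fintype_card, Fintype.card_subtype]
  rw [hunion, card_biUnion]
  · refine sum_congr rfl fun A _ ↦ card_biUnion fun z hz z' hz' hzz' ↦ ?_
    refine disjoint_left.2 fun f hf hf' ↦ hzz' ?_
    simp only [mem_filter, mem_univ, true_and] at hf hf'
    exact (hf.unique hf' hz hz').2
  · intro A _ A' _ hAA'
    refine disjoint_left.2 fun f hf hf' ↦ hAA' ?_
    obtain ⟨z, hz, hf⟩ := hmem hf
    obtain ⟨z', hz', hf'⟩ := hmem hf'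
    exact (hf.unique hf' hz hz').1

theorem card_isCommNilpotentOfDegreeThree :
    (Nat.card {f : α → α → α // IsCommNilpotentOfDegreeThree f} : ℤ) =
      ∑ m ∈ Icc 2 (Fintype.card α), ((Fintype.card α).choose m : ℤ) * m *
        ∑ i ∈ range m, (-1) ^ i * ((m - 1).choose i : ℤ) * ((m : ℤ) - i) ^
          ((Fintype.card α - m) * (Fintype.card α - m + 1) / 2) := by
  set n := Fintype.card α
  set N : ℕ → ℤ := fun m ↦ ∑ i ∈ range m, (-1) ^ i * ((m - 1).choose i : ℤ) * ((m : ℤ) - i) ^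
    ((n - m) * (n - m + 1) / 2)
  have hIcc : {m ∈ range (n + 1) | 2 ≤ m} = Icc 2 n := by
    ext m
    simp only [mem_filter, mem_range, mem_Icc]
    omega
  calc (Nat.card {f : α → α → α // IsCommNilpotentOfDegreeThree f} : ℤ)
      = ∑ A : Finset α with 2 ≤ #A, ∑ z ∈ A, (Nat.card {f // IsNilpotentWith A z f} : ℤ) := by
        rw [card_isCommNilpotentOfDegreeThree_eq_sum]
        push_cast
        rfl
    _ = ∑ A ∈ (univ : Finset α).powerset, if 2 ≤ #A then (#A : ℤ) * N #A else 0 := by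
        rw [powerset_univ, sum_filter]
        refine sum_congr rfl fun A _ ↦ if_congr Iff.rfl ?_ rfl
        rw [sum_congr rfl fun z hz ↦ card_isNilpotentWith hz, sum_const, nsmul_eq_mul]
    _ = ∑ m ∈ range (n + 1), n.choose m • if 2 ≤ m then (m : ℤ) * N m else 0 := by
        rw [sum_powerset_apply_card fun m ↦ if 2 ≤ m then (m : ℤ) * N m else 0, card_univ]
    _ = ∑ m ∈ Icc 2 n, (n.choose m : ℤ) * m * N m := by
        simp_rw [smul_ite, smul_zero]
        rw [← sum_filter, hIcc]
        exact sum_congr rfl fun m _ ↦ by rw [nsmul_eq_mul, mul_assoc]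

end NilpotentSemigroups

/-- The number of distinct commutative nilpotent semigroups of degree 3 on {1,…,n}. -/
theorem stmt6 (n : ℕ) :
    (Nat.card {f : Fin n → Fin n → Fin n //
        (∀ x y w, f (f x y) w = f x (f y w)) ∧
        (∀ x y, f x y = f y x) ∧
        ∃ z : Fin n, (∀ t, f z t = z ∧ f t z = z) ∧
          (∀ x y w, f (f x y) w = z) ∧ (∃ x y, f x y ≠ z)} : ℤ) =
    ∑ m ∈ Finset.Icc 2 (⌊(n : ℝ) + 3/2 - Real.sqrt (2 * (n : ℝ) + 1/4)⌋₊),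
      (n.choose m : ℤ) * m *
        ∑ i ∈ Finset.range m,
          (-1 : ℤ) ^ i * ((m - 1).choose i : ℤ) *
            ((m : ℤ) - (i : ℤ)) ^ ((n - m) * (n - m + 1) / 2) := by
  have hrange : Icc 2 ⌊(n : ℝ) + 3/2 - √(2 * (n : ℝ) + 1/4)⌋₊ =
      {m ∈ Icc 2 n | m - 1 ≤ (n - m) * (n - m + 1) / 2} := by
    ext m
    rw [mem_Icc, mem_filter, mem_Icc, and_assoc]
    exact and_congr_right le_floor_three_halves_sub_sqrt_iff
  rw [hrange, sum_filter_of_ne fun m _ hm ↦ ?_]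
  · have hcount := card_isCommNilpotentOfDegreeThree (α := Fin n)
    rw [Fintype.card_fin] at hcount
    exact hcount
  · by_contra hK
    exact hm (by rw [sum_alternating_choose_pow_eq_zero (by omega), mul_zero])
end

section
/- Let α be a permutation of a finite set X and let z_a, z_b be cycles of α of lengths a and b on disjoint supports (or on equal supports when considering one cycle against itself). Consider the induced action of α on X × X acting componentwise. If z_a and z_b are disjoint cycles, then the set of pairs with first component in the support of z_a and second component in the support of z_b (a set of size ab) splits into exactly gcd(a,b) orbits, each of length lcm(a,b). -/
/-!
The cycle of `x` under `σ` is the `⟨σ⟩`-orbit of `x`, so its size is the minimal period of `x`.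
Under `σ × σ` the minimal period of `(x, y)` is the lcm of those of `x` and `y`, so every
cycle of `σ × σ` meeting `Sa ×ˢ Sb` has `lcm a b` elements. These cycles partition
`Sa ×ˢ Sb`, which has `a * b = gcd a b * lcm a b` elements, so there are `gcd a b` of them.
-/

open Equiv Equiv.Perm Function

theorem Equivalence.ncard_classes_mul_eq_ncard {α : Type*} {r : α → α → Prop}
    (hr : Equivalence r) {S : Set α} (hS : S.Finite) (hclosed : ∀ p ∈ S, ∀ q, r p q → q ∈ S)
    {n : ℕ} (hn : ∀ p ∈ S, {q | r p q}.ncard = n) :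
    {O | ∃ p ∈ S, O = {q | r p q}}.ncard * n = S.ncard := by
  classical
  set cls : α → Set α := fun p => {q | r p q}
  have hfiber : ∀ p ∈ S, ↑(hS.toFinset.filter fun x => cls x = cls p) = cls p := by
    intro p hp
    ext x
    simp only [Finset.coe_filter, Set.Finite.mem_toFinset, Set.mem_ofPred_eq]
    constructor
    · rintro ⟨-, hx⟩
      rw [← hx]
      exact hr.refl x
    · intro hpx
      exact ⟨hclosed p hp x hpx, Set.ext fun q => ⟨hr.trans hpx, hr.trans (hr.symm hpx)⟩⟩
  have himage : {O | ∃ p ∈ S, O = cls p} = (hS.toFinset.image cls : Set (Set α)) := by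
    ext O
    simp [eq_comm]
  rw [himage, Set.ncard_coe_finset, Set.ncard_eq_toFinset_card S hS,
    Finset.card_eq_sum_card_image cls, Finset.sum_const_nat]
  intro O hO
  obtain ⟨p, hp, rfl⟩ := Finset.mem_image.1 hO
  rw [Set.Finite.mem_toFinset] at hp
  rw [← Set.ncard_coe_finset, hfiber p hp, hn p hp]

namespace Equiv.Perm

variable {α β : Type*}

theorem prodCongr_zpow (σ : Perm α) (τ : Perm β) (k : ℤ) :
    prodCongr σ τ ^ k = prodCongr (σ ^ k) (τ ^ k) :=
  let φ : Perm α × Perm β →* Perm (α × β) :=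
    MonoidHom.mk' (fun s => prodCongr s.1 s.2) fun _ _ => rfl
  (map_zpow φ (σ, τ) k).symm

theorem SameCycle.of_prodCongr {σ : Perm α} {τ : Perm β} {p q : α × β}
    (h : SameCycle (prodCongr σ τ) p q) : σ.SameCycle p.1 q.1 ∧ τ.SameCycle p.2 q.2 := by
  obtain ⟨k, rfl⟩ := h
  rw [prodCongr_zpow]
  exact ⟨⟨k, Eq.refl _⟩, ⟨k, Eq.refl _⟩⟩

theorem SameCycle.setOf_sameCycle_eq {σ : Perm α} {x y : α} (h : σ.SameCycle x y) :
    {z | σ.SameCycle y z} = {z | σ.SameCycle x z} :=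
  Set.ext fun _ => ⟨h.trans, h.symm.trans⟩

theorem setOf_sameCycle_eq_orbit (σ : Perm α) (x : α) :
    {y | σ.SameCycle x y} = MulAction.orbit (Subgroup.zpowers σ) x := by
  ext y
  simp [SameCycle, MulAction.mem_orbit_iff, Subgroup.smul_def, Perm.smul_def]

theorem ncard_setOf_sameCycle [Finite α] (σ : Perm α) (x : α) :
    {y | σ.SameCycle x y}.ncard = minimalPeriod σ x := by
  have := Fintype.ofFinite (MulAction.orbit (Subgroup.zpowers σ) x)
  rw [setOf_sameCycle_eq_orbit, ← Nat.card_coe_set_eq, Nat.card_eq_fintype_card]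
  exact (MulAction.minimalPeriod_eq_card (a := σ) (b := x)).symm

theorem ncard_setOf_sameCycle_prodCongr [Finite α] [Finite β] (σ : Perm α) (τ : Perm β)
    (p : α × β) :
    {q | SameCycle (prodCongr σ τ) p q}.ncard =
      Nat.lcm {x | σ.SameCycle p.1 x}.ncard {y | τ.SameCycle p.2 y}.ncard := by
  simp only [ncard_setOf_sameCycle]
  exact minimalPeriod_prodMap σ τ p

end Equiv.Perm

theorem stmt9_general {X : Type*} [Fintype X] (α : Equiv.Perm X) (a b : ℕ)
    (ha : 1 ≤ a) (hb : 1 ≤ b) (xa xb : X) (Sa Sb : Set X)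
    (hSa : Sa = {y | α.SameCycle xa y}) (hSb : Sb = {y | α.SameCycle xb y})
    (hca : Sa.ncard = a) (hcb : Sb.ncard = b) :
    (∀ p ∈ Sa ×ˢ Sb,
        Set.ncard {q | Equiv.Perm.SameCycle (Equiv.prodCongr α α) p q} = Nat.lcm a b) ∧
    Set.ncard {O : Set (X × X) | ∃ p ∈ Sa ×ˢ Sb,
        O = {q | Equiv.Perm.SameCycle (Equiv.prodCongr α α) p q}} = Nat.gcd a b := by
  have hcycles : ∀ p ∈ Sa ×ˢ Sb,
      {x | α.SameCycle p.1 x} = Sa ∧ {y | α.SameCycle p.2 y} = Sb := by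
    rintro p ⟨h1, h2⟩
    subst hSa hSb
    exact ⟨SameCycle.setOf_sameCycle_eq h1, SameCycle.setOf_sameCycle_eq h2⟩
  have horbit : ∀ p ∈ Sa ×ˢ Sb,
      {q | SameCycle (prodCongr α α) p q}.ncard = Nat.lcm a b := by
    intro p hp
    rw [ncard_setOf_sameCycle_prodCongr, (hcycles p hp).1, (hcycles p hp).2, hca, hcb]
  have hclosed : ∀ p ∈ Sa ×ˢ Sb, ∀ q, SameCycle (prodCongr α α) p q → q ∈ Sa ×ˢ Sb := by
    intro p hp q hpq
    rw [← (hcycles p hp).1, ← (hcycles p hp).2]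
    exact hpq.of_prodCongr
  refine ⟨horbit, ?_⟩
  have hcount := (SameCycle.equivalence (f := prodCongr α α)).ncard_classes_mul_eq_ncard
    (Set.toFinite _) hclosed horbit
  rw [Set.ncard_prod, hca, hcb, ← Nat.gcd_mul_lcm a b] at hcount
  exact Nat.eq_of_mul_eq_mul_right (Nat.lcm_pos ha hb) hcount

/-- Two disjoint cycles of lengths a and b of a permutation α induce, under the
componentwise action of α on X × X, exactly gcd(a,b) orbits on the ab pairs with
first component in the first cycle and second component in the second cycle,
each orbit of length lcm(a,b). -/
theorem stmt9 {X : Type*} [Fintype X] (α : Equiv.Perm X) (a b : ℕ)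
    (ha : 1 ≤ a) (hb : 1 ≤ b) (xa xb : X) (Sa Sb : Set X)
    (hSa : Sa = {y | α.SameCycle xa y}) (hSb : Sb = {y | α.SameCycle xb y})
    (hca : Sa.ncard = a) (hcb : Sb.ncard = b) (hdisj : Disjoint Sa Sb) :
    (∀ p ∈ Sa ×ˢ Sb,
        Set.ncard {q | Equiv.Perm.SameCycle (Equiv.prodCongr α α) p q} = Nat.lcm a b) ∧
    Set.ncard {O : Set (X × X) | ∃ p ∈ Sa ×ˢ Sb,
        O = {q | Equiv.Perm.SameCycle (Equiv.prodCongr α α) p q}} = Nat.gcd a b :=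
  stmt9_general α a b ha hb xa xb Sa Sb hSa hSb hca hcb
end

section
/- Let α be a permutation of a finite set X with a cycle z_a = (i₁ i₂ ⋯ i_a) of length a. Under the induced action of α on unordered pairs (subsets of size 1 or 2) of X, the a² ordered pairs with both components in the support of z_a give rise to orbits whose cycle-structure contribution is x_{a/2} · x_a^{a/2} if a is even, and x_a^{(a+1)/2} if a is odd. -/
/-!
Numbering the cycle of `xa` by `ZMod a`, so that `α` becomes `· + 1`, reduces everything to
translations of `ZMod a`. There the orbit of `{i, i + d}` is the family of all pairs `{j, j + d}`.
It only depends on `±d`, so the orbits are indexed by `0 ≤ d ≤ a / 2`, and it has `a` members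
except for `d = a / 2` with `a` even, where `{j, j + d} = {j + d, j + 2d}` halves it.
-/

open Set Function

def imageOrbits {Y : Type*} (f : Y → Y) (Q : Set (Set Y)) : Set (Set (Set Y)) :=
  {O | ∃ s ∈ Q, O = {t | ∃ k : ℕ, (image f)^[k] s = t}}

theorem imageOrbits_image {X Y : Type*} {f : Y → Y} {g : X → X} {e : Y → X}
    (he : Semiconj e f g) (Q : Set (Set Y)) :
    imageOrbits g (image e '' Q) = image (image e) '' imageOrbits f Q := by
  have hk (k : ℕ) (s : Set Y) : (image g)^[k] (e '' s) = e '' (image f)^[k] s :=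
    (he.set_image.iterate_right k s).symm
  ext O
  simp only [imageOrbits, mem_ofPred_eq, exists_exists_and_eq_and, mem_image]
  constructor
  · rintro ⟨s, hs, rfl⟩
    refine ⟨_, ⟨s, hs, rfl⟩, ?_⟩
    ext t
    simp [hk]
  · rintro ⟨_, ⟨s, hs, rfl⟩, rfl⟩
    refine ⟨s, hs, ?_⟩
    ext t
    simp [hk]

theorem setOf_subset_range_and_ncard_eq_image {X Y : Type*} {e : Y → X} (he : Injective e)
    (p : ℕ → Prop) : {s | s ⊆ range e ∧ p s.ncard} = image e '' {t | p t.ncard} := by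
  ext s
  constructor
  · rintro ⟨hs, hp⟩
    refine ⟨e ⁻¹' s, ?_, image_preimage_eq_of_subset hs⟩
    show p (e ⁻¹' s).ncard
    rwa [← ncard_image_of_injective _ he, image_preimage_eq_of_subset hs]
  · rintro ⟨t, ht, rfl⟩
    exact ⟨image_subset_range e t, by rwa [ncard_image_of_injective _ he]⟩

theorem Equiv.Perm.exists_zmod_semiconj_sameCycle {X : Type*} (α : Equiv.Perm X) (x : X)
    {n : ℕ} (hn : {y | α.SameCycle x y}.ncard = n) :
    ∃ e : ZMod n → X, Injective e ∧ range e = {y | α.SameCycle x y} ∧ Semiconj e (· + 1) α := by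
  set e := Subtype.val ∘ (MulAction.orbitZPowersEquiv α x).symm with he
  have he_inj : Injective e := Subtype.val_injective.comp (Equiv.injective _)
  have he_range : range e = {y | α.SameCycle x y} := by
    rw [he, range_comp, Equiv.range_eq_univ, image_univ, Subtype.range_coe]
    ext y
    simp only [MulAction.mem_orbit_iff, Subtype.exists, Subgroup.mem_zpowers_iff]
    constructor
    · rintro ⟨_, ⟨k, rfl⟩, rfl⟩
      exact ⟨k, rfl⟩
    · rintro ⟨k, rfl⟩
      exact ⟨_, ⟨k, rfl⟩, rfl⟩
  obtain rfl : minimalPeriod (α • ·) x = n := by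
    rw [← hn, ← he_range, ncard_range_of_injective he_inj, Nat.card_zmod]
  refine ⟨e, he_inj, he_range, fun k => ?_⟩
  show e (k + 1) = α (e k)
  rw [← ZMod.intCast_zmod_cast k, ← Int.cast_one, ← Int.cast_add, add_comm]
  simp only [e, comp_apply, MulAction.orbitZPowersEquiv_symm_apply', zpow_one_add, mul_smul]
  rfl

theorem image_add_one_iterate {R : Type*} [AddMonoidWithOne R] (s : Set R) (k : ℕ) :
    (image (· + 1))^[k] s = (· + (k : R)) '' s := by
  rw [← image_iterate_eq, add_right_iterate, nsmul_one]

section ZModPairs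

variable {n : ℕ}

def pairOrbit (d : ZMod n) : Set (Set (ZMod n)) := range fun j => {j, j + d}

theorem setOf_iterate_image_add_one_pair [NeZero n] (i d : ZMod n) :
    {t | ∃ k : ℕ, (image (· + 1))^[k] {i, i + d} = t} = pairOrbit d := by
  ext t
  simp only [mem_ofPred_eq, image_add_one_iterate, image_pair, pairOrbit, mem_range]
  constructor
  · rintro ⟨k, rfl⟩
    exact ⟨i + k, by rw [add_right_comm]⟩
  · rintro ⟨j, rfl⟩
    refine ⟨(j - i).val, ?_⟩
    rw [ZMod.natCast_zmod_val, add_sub_cancel, add_right_comm, add_sub_cancel]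

theorem pairOrbit_neg (d : ZMod n) : pairOrbit (-d) = pairOrbit d := by
  have h (c : ZMod n) : pairOrbit c ⊆ pairOrbit (-c) := by
    rintro _ ⟨j, rfl⟩
    exact ⟨j + c, by simp only [add_neg_cancel_right]; exact pair_comm _ _⟩
  refine subset_antisymm ?_ (h d)
  simpa using h (-d)

theorem eq_or_eq_neg_of_pairOrbit_eq {c d : ZMod n} (h : pairOrbit c = pairOrbit d) :
    d = c ∨ d = -c := by
  obtain ⟨j, hj⟩ : {0, c} ∈ pairOrbit d := h ▸ ⟨0, by simp⟩
  dsimp only at hj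
  rcases pair_eq_pair_iff.mp hj with ⟨rfl, h2⟩ | ⟨h1, h2⟩
  · exact Or.inl (by simpa using h2)
  · exact Or.inr (by linear_combination h2 - h1)

theorem injective_pair_add {d : ZMod n} (hd : d = 0 ∨ 2 * d ≠ 0) :
    Injective fun j : ZMod n => ({j, j + d} : Set (ZMod n)) := by
  intro i j hij
  rcases pair_eq_pair_iff.mp hij with ⟨h, -⟩ | ⟨h1, h2⟩
  · exact h
  · rcases hd with rfl | hd
    · simpa using h1
    · exact absurd (by linear_combination h2 - h1) hd

theorem ncard_pairOrbit {d : ZMod n} (hd : d = 0 ∨ 2 * d ≠ 0) : (pairOrbit d).ncard = n := by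
  rw [pairOrbit, ncard_range_of_injective (injective_pair_add hd), Nat.card_zmod]

theorem ncard_pairOrbit_of_two_mul_eq_zero [NeZero n] {d : ZMod n} (hd : d ≠ 0)
    (h2 : 2 * d = 0) : (pairOrbit d).ncard = n / 2 := by
  classical
  set f : ZMod n → Set (ZMod n) := fun j => {j, j + d}
  have hfiber (j : ZMod n) : ({i | f i = f j} : Finset (ZMod n)) = {j, j + d} := by
    ext i
    simp only [Finset.mem_filter, Finset.mem_univ, true_and, Finset.mem_insert,
      Finset.mem_singleton, f, pair_eq_pair_iff]
    constructor
    · rintro (⟨h, -⟩ | ⟨h, -⟩) <;> simp [h]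
    · rintro (rfl | rfl)
      · simp
      · exact Or.inr ⟨rfl, by linear_combination h2⟩
  have hcard : n = (Finset.univ.image f).card * 2 := by
    refine (ZMod.card n).symm.trans <| (Finset.card_eq_sum_card_image f _).trans <|
      Finset.sum_const_nat fun O hO => ?_
    obtain ⟨j, -, rfl⟩ := Finset.mem_image.mp hO
    rw [hfiber, Finset.card_pair (by simpa using hd)]
  rw [pairOrbit, ← image_univ, ← Finset.coe_univ, ← Finset.coe_image, ncard_coe_finset]
  exact (Nat.div_eq_of_eq_mul_left two_pos hcard).symm

theorem ncard_pairOrbit_natCast [NeZero n] {m : ℕ} (hm : m ≤ n / 2) :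
    (pairOrbit (m : ZMod n)).ncard = if 2 * m = n then n / 2 else n := by
  have hn := NeZero.pos n
  have h2m : 2 * (m : ZMod n) = ((2 * m : ℕ) : ZMod n) := by push_cast; ring
  split_ifs with h
  · refine ncard_pairOrbit_of_two_mul_eq_zero ?_ (by rw [h2m, h, ZMod.natCast_self])
    rw [Ne, ZMod.natCast_eq_zero_iff]
    exact fun hdvd => absurd (Nat.le_of_dvd (by omega) hdvd) (by omega)
  · refine ncard_pairOrbit ?_
    rw [h2m, ZMod.natCast_eq_zero_iff, Ne, ZMod.natCast_eq_zero_iff]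
    rcases Nat.eq_zero_or_pos m with rfl | hpos
    · exact Or.inl (dvd_zero n)
    · exact Or.inr fun hdvd => absurd (Nat.le_of_dvd (by omega) hdvd) (by omega)

theorem pairOrbit_natCast_injOn [NeZero n] :
    InjOn (fun m : ℕ => pairOrbit (m : ZMod n)) (Iic (n / 2)) := by
  intro m hm m' hm' h
  have hn := NeZero.pos n
  simp only [mem_Iic] at hm hm'
  rcases eq_or_eq_neg_of_pairOrbit_eq h with h | h
  · rw [ZMod.natCast_eq_natCast_iff', Nat.mod_eq_of_lt (by omega),
      Nat.mod_eq_of_lt (by omega)] at h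
    exact h.symm
  · rw [eq_neg_iff_add_eq_zero, ← Nat.cast_add, ZMod.natCast_eq_zero_iff] at h
    rcases Nat.eq_zero_or_pos (m' + m) with h0 | hpos
    · omega
    · have := Nat.le_of_dvd hpos h
      omega

theorem range_pairOrbit_eq_image_Iic [NeZero n] :
    range (pairOrbit (n := n)) = (fun m : ℕ => pairOrbit (m : ZMod n)) '' Iic (n / 2) := by
  refine (range_subset_iff.mpr fun d => ?_).antisymm (image_subset_range _ _ |>.trans ?_)
  · by_cases h : d.val ≤ n / 2
    · exact ⟨d.val, h, by simp only [ZMod.natCast_zmod_val]⟩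
    · refine ⟨(-d).val, ?_, by simp only [ZMod.natCast_zmod_val, pairOrbit_neg]⟩
      have := d.val_lt
      rw [mem_Iic, ZMod.neg_val]
      split_ifs <;> omega
  · rintro _ ⟨m, rfl⟩
    exact mem_range_self _

theorem imageOrbits_add_one_eq_range_pairOrbit [NeZero n] :
    imageOrbits (· + 1 : ZMod n → ZMod n) {s | s.ncard = 1 ∨ s.ncard = 2} = range pairOrbit := by
  ext O
  constructor
  · rintro ⟨s, hs, rfl⟩
    obtain ⟨i, d, rfl⟩ : ∃ i d : ZMod n, s = {i, i + d} := by
      rcases hs with h | h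
      · obtain ⟨i, rfl⟩ := ncard_eq_one.mp h
        exact ⟨i, 0, by simp⟩
      · obtain ⟨i, j, -, rfl⟩ := ncard_eq_two.mp h
        exact ⟨i, j - i, by rw [add_sub_cancel]⟩
    exact ⟨d, (setOf_iterate_image_add_one_pair i d).symm⟩
  · rintro ⟨d, rfl⟩
    refine ⟨{0, 0 + d}, ?_, (setOf_iterate_image_add_one_pair 0 d).symm⟩
    rw [zero_add]
    by_cases hd : d = 0
    · simp [hd]
    · exact Or.inr (ncard_pair (Ne.symm hd))

end ZModPairs

/-- The orbits in `𝒪` contribute `x_{a/2} x_a^{a/2}` (`a` even), resp. `x_a^{(a+1)/2}` (`a` odd),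
to the cycle index. -/
def HasPairOrbitType {β : Type*} (a : ℕ) (𝒪 : Set (Set β)) : Prop :=
  (a % 2 = 0 →
    {O ∈ 𝒪 | O.ncard = a / 2}.ncard = 1 ∧ {O ∈ 𝒪 | O.ncard = a}.ncard = a / 2 ∧
    ∀ O ∈ 𝒪, O.ncard = a / 2 ∨ O.ncard = a) ∧
  (a % 2 = 1 → 𝒪.ncard = (a + 1) / 2 ∧ ∀ O ∈ 𝒪, O.ncard = a)

theorem HasPairOrbitType.image {β γ : Type*} {a : ℕ} {𝒪 : Set (Set β)} {Φ : β → γ}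
    (hΦ : Injective Φ) (h : HasPairOrbitType a 𝒪) : HasPairOrbitType a (Set.image Φ '' 𝒪) := by
  have hΦ' : Injective (Set.image Φ) := image_injective.mpr hΦ
  have hsep (c : ℕ) :
      {O ∈ Set.image Φ '' 𝒪 | O.ncard = c} = Set.image Φ '' {O ∈ 𝒪 | O.ncard = c} := by
    ext O
    constructor
    · rintro ⟨⟨O, hO, rfl⟩, hc⟩
      exact ⟨O, ⟨hO, (ncard_image_of_injective _ hΦ).symm.trans hc⟩, rfl⟩
    · rintro ⟨O, ⟨hO, hc⟩, rfl⟩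
      exact ⟨mem_image_of_mem _ hO, (ncard_image_of_injective _ hΦ).trans hc⟩
  simp only [HasPairOrbitType, hsep, ncard_image_of_injective _ hΦ', forall_mem_image,
    ncard_image_of_injective _ hΦ]
  exact h

theorem hasPairOrbitType_image_Iic {β : Type*} {n : ℕ} (hn : 0 < n) {P : ℕ → Set β}
    (hP : InjOn P (Iic (n / 2)))
    (hcard : ∀ m ∈ Iic (n / 2), (P m).ncard = if 2 * m = n then n / 2 else n) :
    HasPairOrbitType n (P '' Iic (n / 2)) := by
  have hsep (c : ℕ) : {O ∈ P '' Iic (n / 2) | O.ncard = c} =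
      P '' {m ∈ Iic (n / 2) | (if 2 * m = n then n / 2 else n) = c} := by
    ext O
    constructor
    · rintro ⟨⟨m, hm, rfl⟩, hc⟩
      exact ⟨m, ⟨hm, (hcard m hm).symm.trans hc⟩, rfl⟩
    · rintro ⟨m, ⟨hm, hc⟩, rfl⟩
      exact ⟨mem_image_of_mem _ hm, (hcard m hm).trans hc⟩
  refine ⟨fun he => ⟨?_, ?_, ?_⟩, fun ho => ⟨?_, ?_⟩⟩
  · have : {m ∈ Iic (n / 2) | (if 2 * m = n then n / 2 else n) = n / 2} = {n / 2} := by
      ext m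
      simp only [mem_Iic, mem_ofPred_eq, mem_singleton_iff]
      split_ifs <;> omega
    rw [hsep, this, image_singleton, ncard_singleton]
  · have : {m ∈ Iic (n / 2) | (if 2 * m = n then n / 2 else n) = n} = Iio (n / 2) := by
      ext m
      simp only [mem_Iic, mem_Iio, mem_ofPred_eq]
      split_ifs <;> omega
    rw [hsep, this, (hP.mono Iio_subset_Iic_self).ncard_image, ncard_Iio_nat]
  · rintro _ ⟨m, hm, rfl⟩
    rw [hcard m hm]
    split_ifs <;> simp
  · rw [hP.ncard_image, ncard_Iic_nat]
    omega
  · rintro _ ⟨m, hm, rfl⟩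
    rw [hcard m hm, if_neg (by omega)]

theorem hasPairOrbitType_imageOrbits_add_one (n : ℕ) [NeZero n] :
    HasPairOrbitType n (imageOrbits (· + 1 : ZMod n → ZMod n) {s | s.ncard = 1 ∨ s.ncard = 2}) := by
  rw [imageOrbits_add_one_eq_range_pairOrbit, range_pairOrbit_eq_image_Iic]
  exact hasPairOrbitType_image_Iic (NeZero.pos n) pairOrbit_natCast_injOn
    fun m hm => ncard_pairOrbit_natCast hm

theorem stmt11_general {X : Type*} [Fintype X] (α : Equiv.Perm X) (a : ℕ)
    (xa : X) (Sa : Set X) (hSa : Sa = {y | α.SameCycle xa y}) (hca : Sa.ncard = a) :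
    ∀ (F : Set X → Set X), F = (fun s => α '' s) →
    ∀ Q : Set (Set X), Q = {s | s ⊆ Sa ∧ (s.ncard = 1 ∨ s.ncard = 2)} →
    ∀ 𝒪 : Set (Set (Set X)), 𝒪 = {O | ∃ s ∈ Q, O = {t | ∃ k : ℕ, F^[k] s = t}} →
    (a % 2 = 0 →
      Set.ncard {O ∈ 𝒪 | O.ncard = a / 2} = 1 ∧
      Set.ncard {O ∈ 𝒪 | O.ncard = a} = a / 2 ∧
      ∀ O ∈ 𝒪, O.ncard = a / 2 ∨ O.ncard = a) ∧
    (a % 2 = 1 →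
      Set.ncard 𝒪 = (a + 1) / 2 ∧ ∀ O ∈ 𝒪, O.ncard = a) := by
  rintro F rfl Q rfl 𝒪 rfl
  subst hSa
  have : NeZero a := ⟨hca ▸ ((ncard_pos (toFinite _)).mpr ⟨xa, .refl α xa⟩).ne'⟩
  obtain ⟨e, he_inj, he_range, he⟩ := α.exists_zmod_semiconj_sameCycle xa hca
  rw [← he_range, setOf_subset_range_and_ncard_eq_image he_inj fun k => k = 1 ∨ k = 2]
  change HasPairOrbitType a (imageOrbits α _)
  rw [imageOrbits_image he]
  exact (hasPairOrbitType_imageOrbits_add_one a).image (image_injective.mpr he_inj)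

/-- A cycle of length a of α contributes, on unordered pairs (subsets of size 1 or 2)
with elements in its support, the cycle-structure monomial x_{a/2}·x_a^{a/2} if a is even
and x_a^{(a+1)/2} if a is odd. -/
theorem stmt11 {X : Type*} [Fintype X] (α : Equiv.Perm X) (a : ℕ) (ha : 1 ≤ a)
    (xa : X) (Sa : Set X) (hSa : Sa = {y | α.SameCycle xa y}) (hca : Sa.ncard = a) :
    ∀ (F : Set X → Set X), F = (fun s => α '' s) →
    ∀ Q : Set (Set X), Q = {s | s ⊆ Sa ∧ (s.ncard = 1 ∨ s.ncard = 2)} →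
    ∀ 𝒪 : Set (Set (Set X)), 𝒪 = {O | ∃ s ∈ Q, O = {t | ∃ k : ℕ, F^[k] s = t}} →
    (a % 2 = 0 →
      Set.ncard {O ∈ 𝒪 | O.ncard = a / 2} = 1 ∧
      Set.ncard {O ∈ 𝒪 | O.ncard = a} = a / 2 ∧
      ∀ O ∈ 𝒪, O.ncard = a / 2 ∨ O.ncard = a) ∧
    (a % 2 = 1 →
      Set.ncard 𝒪 = (a + 1) / 2 ∧ ∀ O ∈ 𝒪, O.ncard = a) :=
  stmt11_general α a xa Sa hSa hca
end

section
/- Let α be a permutation of a finite set X and consider the permutation τ of X × X given by τ(x,y) = (y^α, x^α) (the 'twisted' action of ((1 2), α)). If z_a and z_b are disjoint cycles of α of lengths a and b, then the 2ab ordered pairs with one component in the support of each cycle split into exactly 2ab/lcm(2,a,b) orbits under τ, each of length lcm(2,a,b). -/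
open Function Equiv

lemma orbit_ncard {X : Type*} [Fintype X] (f : Equiv.Perm X) (x : X) :
    {y | f.SameCycle x y}.ncard = Function.minimalPeriod f x := by
  have hx : x ∈ Function.periodicPts f := by
    refine ⟨orderOf f, orderOf_pos f, ?_⟩
    simp [Function.IsPeriodicPt, Function.IsFixedPt, ← Equiv.Perm.coe_pow, pow_orderOf_eq_one]
  set m := Function.minimalPeriod f x with hm
  have hmpos : 0 < m := Function.minimalPeriod_pos_of_mem_periodicPts hx
  have hset : {y | f.SameCycle x y} = (fun n => (f ^ n) x) '' ↑(Finset.range m) := by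
    ext y
    constructor
    · intro hy
      obtain ⟨i, _, hi⟩ := hy.exists_pow_eq'
      refine ⟨i % m, by simpa using Nat.mod_lt _ hmpos, ?_⟩
      rw [← hi]
      simp only [Equiv.Perm.coe_pow]
      exact Function.iterate_mod_minimalPeriod_eq
    · rintro ⟨n, _, rfl⟩
      exact Equiv.Perm.sameCycle_pow_right.mpr (Equiv.Perm.SameCycle.refl f x)
  have hinj : Set.InjOn (fun n => (f ^ n) x) ↑(Finset.range m) := by
    rw [Finset.coe_range]
    intro i hi j hj hij
    have hij' : (⇑f)^[i] x = (⇑f)^[j] x := by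
      rw [← Equiv.Perm.coe_pow, ← Equiv.Perm.coe_pow]; exact hij
    exact Function.iterate_injOn_Iio_minimalPeriod hi hj hij' 
  rw [hset, Set.ncard_image_of_injOn hinj, Set.ncard_coe_finset, Finset.card_range]

lemma tau_pow {X : Type*} (f : Equiv.Perm X) (n : ℕ) (u v : X) :
    (((Equiv.prodComm X X).trans (Equiv.prodCongr f f)) ^ n) (u, v) =
      if Even n then ((f ^ n) u, (f ^ n) v) else ((f ^ n) v, (f ^ n) u) := by
  induction n with
  | zero => simp
  | succ n ih =>
    rw [pow_succ', Equiv.Perm.mul_apply, ih]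
    by_cases h : Even n <;>
      simp [h, Nat.even_add_one, pow_succ', Equiv.Perm.mul_apply]

lemma min_period_tau {X : Type*} [Fintype X] (f : Equiv.Perm X) (x y : X)
    (h : ¬ f.SameCycle x y) :
    Function.minimalPeriod (⇑((Equiv.prodComm X X).trans (Equiv.prodCongr f f))) (x, y) =
      Nat.lcm 2 (Nat.lcm (Function.minimalPeriod f x) (Function.minimalPeriod f y)) := by
  set τ := (Equiv.prodComm X X).trans (Equiv.prodCongr f f) with hτ
  set mx := Function.minimalPeriod f x
  set my := Function.minimalPeriod f y
  have key : ∀ n : ℕ, Function.IsPeriodicPt (⇑τ) n (x, y) ↔ (2 ∣ n ∧ mx ∣ n ∧ my ∣ n) := by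
    intro n
    have hiter : (⇑τ)^[n] (x, y) = (τ ^ n) (x, y) := by rw [Equiv.Perm.coe_pow]
    unfold Function.IsPeriodicPt Function.IsFixedPt
    rw [hiter, tau_pow]
    have hiterf : ∀ (m : ℕ) (z : X), (⇑f)^[m] z = (f ^ m) z := by
      intro m z; rw [Equiv.Perm.coe_pow]
    by_cases hn : Even n
    · rw [if_pos hn, Prod.mk.injEq]
      constructor
      · rintro ⟨h1, h2⟩
        refine ⟨even_iff_two_dvd.mp hn, ?_, ?_⟩
        · exact Function.IsPeriodicPt.minimalPeriod_dvd
            (show (⇑f)^[n] x = x by rw [hiterf]; exact h1)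
        · exact Function.IsPeriodicPt.minimalPeriod_dvd
            (show (⇑f)^[n] y = y by rw [hiterf]; exact h2)
      · rintro ⟨-, h1, h2⟩
        have e1 := (Function.isPeriodicPt_iff_minimalPeriod_dvd (f := ⇑f) (x := x) (n := n)).mpr h1
        have e2 := (Function.isPeriodicPt_iff_minimalPeriod_dvd (f := ⇑f) (x := y) (n := n)).mpr h2
        exact ⟨by rw [← hiterf]; exact e1, by rw [← hiterf]; exact e2⟩
    · rw [if_neg hn, Prod.mk.injEq]
      constructor
      · rintro ⟨h1, -⟩
        exact absurd (Equiv.Perm.SameCycle.symm ⟨(n : ℤ), by simpa [zpow_natCast] using h1⟩) h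
      · rintro ⟨h2, -⟩
        exact absurd (even_iff_two_dvd.mpr h2) hn
  set L := Nat.lcm 2 (Nat.lcm mx my) with hL
  have hPL : Function.IsPeriodicPt (⇑τ) L (x, y) := by
    refine (key L).mpr ⟨Nat.dvd_lcm_left _ _, ?_, ?_⟩
    · exact dvd_trans (Nat.dvd_lcm_left mx my) (Nat.dvd_lcm_right 2 _)
    · exact dvd_trans (Nat.dvd_lcm_right mx my) (Nat.dvd_lcm_right 2 _)
  have h2 : Function.minimalPeriod (⇑τ) (x, y) ∣ L := hPL.minimalPeriod_dvd
  have h3 : L ∣ Function.minimalPeriod (⇑τ) (x, y) := by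
    obtain ⟨d2, dx, dy⟩ := (key _).mp (Function.isPeriodicPt_minimalPeriod (⇑τ) (x, y))
    exact Nat.lcm_dvd d2 (Nat.lcm_dvd dx dy)
  exact Nat.dvd_antisymm h2 h3

/-- Under the twisted action τ(x,y) = (α(y), α(x)), the 2ab pairs with one component in
each of two disjoint cycles of α of lengths a and b split into exactly 2ab/lcm(2,a,b)
orbits, each of length lcm(2,a,b). -/
theorem stmt12 {X : Type*} [Fintype X] (α : Equiv.Perm X) (a b : ℕ)
    (ha : 1 ≤ a) (hb : 1 ≤ b) (xa xb : X) (Sa Sb : Set X)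
    (hSa : Sa = {y | α.SameCycle xa y}) (hSb : Sb = {y | α.SameCycle xb y})
    (hca : Sa.ncard = a) (hcb : Sb.ncard = b) (hdisj : Disjoint Sa Sb) :
    ∀ τ : Equiv.Perm (X × X), τ = (Equiv.prodComm X X).trans (Equiv.prodCongr α α) →
    ∀ P : Set (X × X), P = (Sa ×ˢ Sb) ∪ (Sb ×ˢ Sa) →
    (∀ p ∈ P, Set.ncard {q | τ.SameCycle p q} = Nat.lcm 2 (Nat.lcm a b)) ∧
    Set.ncard {O : Set (X × X) | ∃ p ∈ P, O = {q | τ.SameCycle p q}} =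
      2 * a * b / Nat.lcm 2 (Nat.lcm a b) := by
  classical
  intro τ hτ P hP
  set L := Nat.lcm 2 (Nat.lcm a b) with hLdef
  -- minimal period facts
  have hperA : ∀ u ∈ Sa, Function.minimalPeriod α u = a := by
    intro u hu
    rw [hSa] at hu
    have hsets : {y | α.SameCycle u y} = Sa := by
      rw [hSa]; ext z
      exact ⟨fun hz => hu.trans hz, fun hz => hu.symm.trans hz⟩
    rw [← orbit_ncard α u, hsets, hca]
  have hperB : ∀ u ∈ Sb, Function.minimalPeriod α u = b := by
    intro u hu
    rw [hSb] at hu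
    have hsets : {y | α.SameCycle u y} = Sb := by
      rw [hSb]; ext z
      exact ⟨fun hz => hu.trans hz, fun hz => hu.symm.trans hz⟩
    rw [← orbit_ncard α u, hsets, hcb]
  have hnsc : ∀ u ∈ Sa, ∀ v ∈ Sb, ¬ α.SameCycle u v := by
    intro u hu v hv hc
    rw [hSa] at hu; rw [hSb] at hv
    exact Set.disjoint_left.mp hdisj (hSa ▸ (hu.trans hc : α.SameCycle xa v)) (hSb ▸ hv)
  -- part 1
  have part1 : ∀ p ∈ P, Set.ncard {q | τ.SameCycle p q} = L := by
    rintro ⟨u, v⟩ hp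
    rw [orbit_ncard τ (u, v), hτ]
    rw [hP] at hp
    rcases hp with h1 | h1
    · obtain ⟨hu, hv⟩ := h1
      rw [min_period_tau α u v (hnsc u hu v hv), hperA u hu, hperB v hv]
    · obtain ⟨hu, hv⟩ := h1
      have : ¬ α.SameCycle u v := fun hc => hnsc v hv u hu hc.symm
      rw [min_period_tau α u v this, hperB u hu, hperA v hv, Nat.lcm_comm b a]
  refine ⟨part1, ?_⟩
  -- P closed under τ
  have hstep : ∀ p ∈ P, τ p ∈ P := by
    rintro ⟨u, v⟩ hp
    have happ : τ (u, v) = (α v, α u) := by rw [hτ]; rfl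
    have hclA : ∀ w ∈ Sa, α w ∈ Sa := by
      intro w hw; rw [hSa] at *; exact Equiv.Perm.sameCycle_apply_right.mpr hw
    have hclB : ∀ w ∈ Sb, α w ∈ Sb := by
      intro w hw; rw [hSb] at *; exact Equiv.Perm.sameCycle_apply_right.mpr hw
    rw [hP] at hp ⊢
    rcases hp with ⟨hu, hv⟩ | ⟨hu, hv⟩
    · exact Or.inr (happ ▸ ⟨hclB v hv, hclA u hu⟩)
    · exact Or.inl (happ ▸ ⟨hclA v hv, hclB u hu⟩)
  have hpowP : ∀ (n : ℕ), ∀ p ∈ P, (τ ^ n) p ∈ P := by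
    intro n
    induction n with
    | zero => intro p hp; simpa using hp
    | succ n ih =>
      intro p hp
      rw [pow_succ', Equiv.Perm.mul_apply]
      exact hstep _ (ih p hp)
  have horbsub : ∀ p ∈ P, {q | τ.SameCycle p q} ⊆ P := by
    intro p hp q hq
    obtain ⟨i, _, rfl⟩ := (hq : τ.SameCycle p q).exists_pow_eq'
    exact hpowP i p hp
  -- cardinality of P
  have hdisjP : Disjoint (Sa ×ˢ Sb) (Sb ×ˢ Sa) := by
    rw [Set.disjoint_left]
    rintro ⟨u, v⟩ ⟨hu, -⟩ ⟨hu', -⟩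
    exact Set.disjoint_left.mp hdisj hu hu'
  have hprod : ∀ (S T : Set X) (m n : ℕ), S.ncard = m → T.ncard = n →
      (S ×ˢ T).ncard = m * n := by
    intro S T m n hm hn
    rw [← hm, ← hn, ← Nat.card_coe_set_eq, ← Nat.card_coe_set_eq,
      ← Nat.card_coe_set_eq, Nat.card_congr (Equiv.Set.prod S T), Nat.card_prod]
  have hcardP : P.ncard = 2 * a * b := by
    rw [hP, Set.ncard_union_eq hdisjP (Set.toFinite _) (Set.toFinite _),
      hprod Sa Sb a b hca hcb, hprod Sb Sa b a hcb hca]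
    ring
  -- counting orbits
  set F : X × X → Set (X × X) := fun p => {q | τ.SameCycle p q} with hF
  have hOrbEq : {O : Set (X × X) | ∃ p ∈ P, O = {q | τ.SameCycle p q}} = F '' P := by
    ext O; simp only [Set.mem_setOf_eq, Set.mem_image, hF]
    exact ⟨fun ⟨p, hp, h⟩ => ⟨p, hp, h.symm⟩, fun ⟨p, hp, h⟩ => ⟨p, hp, h.symm⟩⟩
  have hPfin : P.Finite := Set.toFinite _
  set s : Finset (X × X) := hPfin.toFinset with hs
  have hsum := Finset.card_eq_sum_card_image F s
  have hfiber : ∀ O ∈ s.image F, (s.filter fun p => F p = O).card = L := by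
    intro O hO
    obtain ⟨q, hq, rfl⟩ := Finset.mem_image.mp hO
    have hqP : q ∈ P := by rwa [hs, Set.Finite.mem_toFinset] at hq
    have : ((s.filter fun p => F p = F q) : Set (X × X)) = F q := by
      ext p
      simp only [Finset.coe_filter, Set.mem_setOf_eq, hs, Set.Finite.mem_toFinset]
      constructor
      · rintro ⟨-, hFp⟩
        rw [← hFp]
        exact Equiv.Perm.SameCycle.refl τ p
      · intro hp
        refine ⟨horbsub q hqP hp, ?_⟩
        have hsc : τ.SameCycle q p := hp
        ext z
        show τ.SameCycle p z ↔ τ.SameCycle q z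
        exact ⟨fun hz => hsc.trans hz, fun hz => hsc.symm.trans hz⟩
    have := congrArg Set.ncard this
    rw [Set.ncard_coe_finset] at this
    rw [this]
    exact part1 q hqP
  rw [Finset.sum_congr rfl hfiber, Finset.sum_const, smul_eq_mul] at hsum
  have hscard : s.card = P.ncard := (Set.ncard_eq_toFinset_card P hPfin).symm
  have hOcard : {O : Set (X × X) | ∃ p ∈ P, O = {q | τ.SameCycle p q}}.ncard = (s.image F).card := by
    rw [hOrbEq, ← Set.ncard_coe_finset (s.image F)]
    congr 1
    rw [Finset.coe_image, hs, Set.Finite.coe_toFinset]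
  rw [hOcard]
  have hLpos : 0 < L := by
    have h1 : Nat.lcm a b ≠ 0 := Nat.lcm_ne_zero (by omega) (by omega)
    have : L ≠ 0 := Nat.lcm_ne_zero (by norm_num) h1
    omega
  have : 2 * a * b = (s.image F).card * L := by rw [← hcardP, ← hscard, hsum]
  rw [this, Nat.mul_div_cancel _ hLpos]
end

section
/- Let S be a nilpotent semigroup of degree 3 with n elements. Then S is isomorphic to a semigroup in Z_{n,m} if and only if m = |S²|, where Z_{n,m} is the set of semigroups H({1,…,n}\{1,…,m}, ψ, 1) on {1,…,n} with ψ : ({m+1,…,n})² → {1,…,m} a function whose image contains {2,…,m}. -/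
/-!
If `S³ = {z}` then `S²` consists of elements annihilating everything, so a product `u v` that is
not the zero has both factors outside `S²`. Hence any bijection `S ≃ Fin n` sending `S²` onto the
first `m = |S²|` values and `z` to `0` carries the multiplication into `Z_{n,m}`. Conversely, for a
multiplication in `Z_{n,m}` the set of products is exactly `{b | b < m}` as soon as some product is
nonzero, so an isomorphism forces `|S²| = m`.
-/

/-- `g` is the multiplication of a semigroup in `Z_{n,m}`, with the points `1, …, n` written
`0, …, n - 1` (so the zero `1` is `0`). -/
def IsZMul (n m : ℕ) (g : Fin n → Fin n → Fin n) : Prop :=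
  (∀ x y : Fin n, m ≤ x.val → m ≤ y.val → (g x y).val < m) ∧
  (∀ x y : Fin n, ¬(m ≤ x.val ∧ m ≤ y.val) → (g x y).val = 0) ∧
  (∀ b : Fin n, 0 < b.val → b.val < m → ∃ x y : Fin n, m ≤ x.val ∧ m ≤ y.val ∧ g x y = b)

def products {S : Type*} (mul : S → S → S) : Set S := {t | ∃ u v, mul u v = t}

theorem image_products_of_map_mul {S T : Type*} {mul : S → S → S} {g : T → T → T} (e : S ≃ T)
    (he : ∀ x y, e (mul x y) = g (e x) (e y)) : e '' products mul = products g := by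
  ext b
  constructor
  · rintro ⟨t, ⟨u, v, rfl⟩, rfl⟩
    exact ⟨e u, e v, (he u v).symm⟩
  · rintro ⟨x, y, rfl⟩
    exact ⟨mul (e.symm x) (e.symm y), ⟨_, _, rfl⟩, by simp [he]⟩

theorem Fin.ncard_setOf_val_lt {n m : ℕ} (h : m ≤ n) : {b : Fin n | b.val < m}.ncard = m := by
  rw [← Nat.card_coe_set_eq]
  exact Nat.card_eq_fintype_card.trans (Fintype.card_fin_lt_of_le h)

namespace IsZMul

variable {n m : ℕ} {g : Fin n → Fin n → Fin n}

theorem val_eq_zero_of_mul_self (hg : IsZMul n m g) {a : Fin n} (ha : g a a = a) : a.val = 0 := by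
  by_cases hm : m ≤ a.val
  · have := hg.1 a a hm hm
    omega
  · simpa [ha] using hg.2.1 a a (by tauto)

theorem pos_and_lt_of_val_ne_zero (hg : IsZMul n m g) {x y : Fin n} (h : (g x y).val ≠ 0) :
    0 < m ∧ m < n := by
  have hxy : m ≤ x.val ∧ m ≤ y.val := by_contra fun hxy ↦ h (hg.2.1 x y hxy)
  have := hg.1 x y hxy.1 hxy.2
  omega

theorem products_eq (hg : IsZMul n m g) (hm : 0 < m) : products g = {b | b.val < m} := by
  ext b
  constructor
  · rintro ⟨x, y, rfl⟩
    by_cases hxy : m ≤ x.val ∧ m ≤ y.val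
    · exact hg.1 x y hxy.1 hxy.2
    · simp only [Set.mem_ofPred_eq, hg.2.1 x y hxy, hm]
  · intro hb
    rcases Nat.eq_zero_or_pos b.val with hb0 | hb0
    · exact ⟨b, b, Fin.ext ((hg.2.1 b b (by omega)).trans hb0.symm)⟩
    · obtain ⟨x, y, -, -, hxy⟩ := hg.2.2 b hb0 hb
      exact ⟨x, y, hxy⟩

end IsZMul

theorem exists_equiv_fin_of_ncard_eq {S : Type*} [Fintype S] {n m : ℕ}
    (hn : Fintype.card S = n) {s : Set S} (hs : s.ncard = m) {z : S} (hz : z ∈ s) :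
    ∃ e : S ≃ Fin n, (e z).val = 0 ∧ ∀ x, (e x).val < m ↔ x ∈ s := by
  classical
  have hcard : Fintype.card s = m := by
    rw [← Nat.card_eq_fintype_card, Nat.card_coe_set_eq, hs]
  have hmn : m ≤ n := hcard ▸ hn ▸ Fintype.card_subtype_le _
  have hm : 0 < m := hcard ▸ Fintype.card_pos_iff.mpr ⟨⟨z, hz⟩⟩
  have hin : Fintype.card s = Fintype.card {b : Fin n // b.val < m} := by
    rw [hcard, Fintype.card_fin_lt_of_le hmn]
  have hout : Fintype.card {x // x ∉ s} = Fintype.card {b : Fin n // ¬b.val < m} := by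
    rw [Fintype.card_subtype_compl, Fintype.card_subtype_compl, hin, Fintype.card_fin, hn]
  -- the swap moves `z` to `0` inside the first block
  let e₁ : s ≃ {b : Fin n // b.val < m} := (Fintype.equivOfCardEq hin).trans
    (Equiv.swap (Fintype.equivOfCardEq hin ⟨z, hz⟩) ⟨⟨0, by omega⟩, hm⟩)
  let e : S ≃ Fin n := (Equiv.sumCompl (· ∈ s)).symm.trans
    ((e₁.sumCongr (Fintype.equivOfCardEq hout)).trans (Equiv.sumCompl _))
  refine ⟨e, ?_, fun x ↦ ?_⟩
  · simp [e, e₁, Equiv.sumCompl_symm_apply_of_pos hz]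
  · by_cases hx : x ∈ s
    · simpa [e, Equiv.sumCompl_symm_apply_of_pos hx, hx] using (e₁ ⟨x, hx⟩).2
    · simpa [e, Equiv.sumCompl_symm_apply_of_neg hx, hx] using
        (Fintype.equivOfCardEq hout ⟨x, hx⟩).2

section Nilpotent

variable {S : Type*} {mul : S → S → S} {z : S}

theorem mul_eq_of_mem_products_left (h3 : ∀ x y w, mul (mul x y) w = z) {t : S}
    (ht : t ∈ products mul) (w : S) : mul t w = z := by
  obtain ⟨u, v, rfl⟩ := ht
  exact h3 u v w

theorem mul_eq_of_mem_products_right (hassoc : ∀ x y w, mul (mul x y) w = mul x (mul y w))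
    (h3 : ∀ x y w, mul (mul x y) w = z) {t : S} (ht : t ∈ products mul) (w : S) :
    mul w t = z := by
  obtain ⟨u, v, rfl⟩ := ht
  rw [← hassoc, h3]

theorem isZMul_of_equiv {n m : ℕ} (hassoc : ∀ x y w, mul (mul x y) w = mul x (mul y w))
    (h3 : ∀ x y w, mul (mul x y) w = z) (e : S ≃ Fin n) (hez : (e z).val = 0)
    (he : ∀ x, (e x).val < m ↔ x ∈ products mul) :
    IsZMul n m fun a b ↦ e (mul (e.symm a) (e.symm b)) := by
  have hmem (a : Fin n) : a.val < m ↔ e.symm a ∈ products mul := by simpa using he (e.symm a)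
  refine ⟨fun a b _ _ ↦ (he _).2 ⟨_, _, rfl⟩, fun a b hab ↦ ?_, fun b hb0 hbm ↦ ?_⟩
  · show (e (mul _ _)).val = 0
    rcases not_and_or.mp hab with ha | hb
    · rw [mul_eq_of_mem_products_left h3 ((hmem a).1 (by omega)), hez]
    · rw [mul_eq_of_mem_products_right hassoc h3 ((hmem b).1 (by omega)), hez]
  · obtain ⟨u, v, huv⟩ := (hmem b).1 hbm
    have hbz : mul u v ≠ z := by
      intro h
      rw [← h, huv, Equiv.apply_symm_apply] at hez
      omega
    have hu : u ∉ products mul := fun h ↦ hbz (mul_eq_of_mem_products_left h3 h v)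
    have hv : v ∉ products mul := fun h ↦ hbz (mul_eq_of_mem_products_right hassoc h3 h u)
    exact ⟨e u, e v, not_lt.1 ((he u).not.2 hu), not_lt.1 ((he v).not.2 hv), by simp [huv]⟩

end Nilpotent

/-- A nilpotent semigroup S of degree 3 with n elements is isomorphic to a semigroup in
Z_{n,m} if and only if m = |S²|.  Here {1,…,n} is modelled as Fin n with the zero z = 1
as 0, [m] as {x | x.val < m}, and A = [n] \ [m] as {x | m ≤ x.val}; membership of a
multiplication g in Z_{n,m} says: products of pairs from A lie in [m], all other
products equal 0, and every element of [m] \ {0} is a product of a pair from A. -/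
theorem stmt14 {S : Type*} [Fintype S] (n m : ℕ) (hn : Fintype.card S = n)
    (mul : S → S → S) (z : S)
    (hassoc : ∀ x y w, mul (mul x y) w = mul x (mul y w))
    (hzero : ∀ t, mul z t = z ∧ mul t z = z)
    (h3 : ∀ x y w, mul (mul x y) w = z)
    (h2 : ∃ x y, mul x y ≠ z) :
    (∃ g : Fin n → Fin n → Fin n,
        ((∀ x y : Fin n, m ≤ x.val → m ≤ y.val → (g x y).val < m) ∧
         (∀ x y : Fin n, ¬(m ≤ x.val ∧ m ≤ y.val) → (g x y).val = 0) ∧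
         (∀ b : Fin n, 0 < b.val → b.val < m →
            ∃ x y : Fin n, m ≤ x.val ∧ m ≤ y.val ∧ g x y = b)) ∧
        ∃ e : S ≃ Fin n, ∀ x y, e (mul x y) = g (e x) (e y)) ↔
      m = Set.ncard {t : S | ∃ u v, mul u v = t} := by
  constructor
  · rintro ⟨g, hg : IsZMul n m g, e, he⟩
    obtain ⟨x, y, hxy⟩ := h2
    have hez : (e z).val = 0 := hg.val_eq_zero_of_mul_self (by rw [← he, (hzero z).1])
    have hne : (g (e x) (e y)).val ≠ 0 := by
      rw [← he, ← hez, Ne, Fin.val_inj, e.apply_eq_iff_eq]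
      exact hxy
    obtain ⟨hm, hmn⟩ := hg.pos_and_lt_of_val_ne_zero hne
    change m = (products mul).ncard
    rw [← Set.ncard_image_of_injective _ e.injective, image_products_of_map_mul e he,
      hg.products_eq hm, Fin.ncard_setOf_val_lt hmn.le]
  · intro hm
    obtain ⟨e, hez, he⟩ :=
      exists_equiv_fin_of_ncard_eq hn hm.symm (s := products mul) ⟨z, z, (hzero z).1⟩
    exact ⟨_, isZMul_of_equiv hassoc h3 e hez he, e, fun x y ↦ by simp⟩
end

section
/- Fix 2 ≤ m ≤ n−1 and let H(ψ), H(χ) ∈ Z_{n,m}. Then H(ψ) and H(χ) are isomorphic if and only if there exist a permutation σ of {m+1,…,n} and a permutation τ of {1,…,m} fixing 1 such that χ(x^σ, y^σ)^τ = ψ(x,y) for all x, y ∈ {m+1,…,n}. -/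
/-!
Every element of `{1,…,m}` is a product in `H(ψ)`: the zero as `1·1`, the others because
they lie in the image of `ψ`. Hence an isomorphism `π : H(ψ) → H(χ)` maps `{1,…,m}` into
itself and, being a bijection of a finite set, splits as a permutation `τ⁻¹` of `{1,…,m}`
and a permutation `σ` of `{m+1,…,n}`. Evaluating `π` on `1·1` shows that `τ` fixes the zero,
and on `x·y` for `x, y > m` gives `χ(xσ, yσ)^τ = ψ(x,y)`. Conversely every such pair
`(σ, τ)` assembles to an isomorphism.
-/

open Equiv

namespace ZeroExtension

variable {A B : Type*}

/-- `H(ψ)` with `B = {1,…,m}`, `A = {m+1,…,n}` and zero `z`: `x·y = ψ(x,y)` on `A × A`, and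
`z` otherwise. -/
def mul (z : B) (ψ : A → A → B) : B ⊕ A → B ⊕ A → B ⊕ A
  | .inr x, .inr y => .inl (ψ x y)
  | .inr _, .inl _ => .inl z
  | .inl _, _ => .inl z

variable {z : B} {ψ χ : A → A → B}

theorem exists_mul_eq_inl (hψ : ∀ b, b ≠ z → ∃ x y, ψ x y = b) (b : B) :
    ∃ u v, mul z ψ u v = .inl b := by
  by_cases hb : b = z
  · exact ⟨.inl b, .inl b, by rw [hb]; rfl⟩
  · obtain ⟨x, y, rfl⟩ := hψ b hb
    exact ⟨.inr x, .inr y, rfl⟩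

theorem mul_mem_range_inl (u v : B ⊕ A) : mul z ψ u v ∈ Set.range Sum.inl := by
  rcases u with _ | _ <;> rcases v with _ | _ <;> exact ⟨_, rfl⟩

theorem mapsTo_range_inl_of_mul_hom (hψ : ∀ b, b ≠ z → ∃ x y, ψ x y = b)
    {f : B ⊕ A → B ⊕ A} (hf : ∀ u v, f (mul z ψ u v) = mul z χ (f u) (f v)) :
    Set.MapsTo f (Set.range Sum.inl) (Set.range Sum.inl) := by
  rintro _ ⟨b, rfl⟩
  obtain ⟨u, v, huv⟩ := exists_mul_eq_inl hψ b
  rw [← huv, hf]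
  exact mul_mem_range_inl _ _

theorem sumCongr_mul_hom_iff (τ : Perm B) (σ : Perm A) :
    (∀ u v, sumCongr τ σ (mul z ψ u v) = mul z χ (sumCongr τ σ u) (sumCongr τ σ v)) ↔
      τ z = z ∧ ∀ x y, τ (ψ x y) = χ (σ x) (σ y) := by
  constructor
  · intro h
    exact ⟨Sum.inl_injective (h (.inl z) (.inl z)),
      fun x y ↦ Sum.inl_injective (h (.inr x) (.inr y))⟩
  · rintro ⟨hz, hτσ⟩ (_ | x) (_ | y)
    all_goals simp [mul, hz, hτσ]

theorem exists_perm_mul_hom_iff [Finite A] [Finite B] (hψ : ∀ b, b ≠ z → ∃ x y, ψ x y = b) :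
    (∃ π : Perm (B ⊕ A), ∀ u v, π (mul z ψ u v) = mul z χ (π u) (π v)) ↔
      ∃ (σ : Perm A) (τ : Perm B), τ z = z ∧ ∀ x y, τ (χ (σ x) (σ y)) = ψ x y := by
  constructor
  · rintro ⟨π, hπ⟩
    obtain ⟨⟨τ, σ⟩, rfl⟩ :=
      Perm.mem_sumCongrHom_range_of_perm_mapsTo_inl (mapsTo_range_inl_of_mul_hom hψ hπ)
    obtain ⟨hz, hτσ⟩ := (sumCongr_mul_hom_iff τ σ).1 hπ
    refine ⟨σ, τ⁻¹, by rw [Perm.inv_eq_iff_eq, hz], fun x y ↦ ?_⟩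
    rw [Perm.inv_eq_iff_eq, hτσ]
  · rintro ⟨σ, τ, hz, hτσ⟩
    refine ⟨sumCongr τ⁻¹ σ, (sumCongr_mul_hom_iff _ _).2 ⟨?_, fun x y ↦ ?_⟩⟩
    · rw [Perm.inv_eq_iff_eq, hz]
    · rw [Perm.inv_eq_iff_eq, hτσ]

end ZeroExtension

theorem exists_perm_hom_congr {X Y : Type*} (e : X ≃ Y) {f g : X → X → X} {f' g' : Y → Y → Y}
    (hf : ∀ u v, f' (e u) (e v) = e (f u v)) (hg : ∀ u v, g' (e u) (e v) = e (g u v)) :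
    (∃ π : Perm Y, ∀ x y, π (f' x y) = g' (π x) (π y)) ↔
      ∃ π : Perm X, ∀ u v, π (f u v) = g (π u) (π v) := by
  refine (e.permCongr.exists_congr fun π ↦ ?_).symm
  refine e.forall_congr fun u ↦ e.forall_congr fun v ↦ ?_
  simp [hf, hg, permCongr_apply]

noncomputable def finSumEquiv {m n : ℕ} (h : m ≤ n) :
    Fin m ⊕ {x : Fin n // m ≤ x.val} ≃ Fin n :=
  Equiv.ofBijective (Sum.elim (Fin.castLE h) Subtype.val)
    ⟨(Fin.castLE_injective h).sumElim Subtype.val_injective fun b x hbx ↦ by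
        have := x.2; rw [← hbx, Fin.val_castLE] at this; exact absurd b.2 (by omega),
      fun x ↦ if hx : m ≤ x.val then ⟨.inr ⟨x, hx⟩, rfl⟩ else ⟨.inl ⟨x, by omega⟩, rfl⟩⟩

@[simp]
theorem finSumEquiv_inl {m n : ℕ} (h : m ≤ n) (b : Fin m) :
    finSumEquiv h (.inl b) = Fin.castLE h b :=
  rfl

@[simp]
theorem finSumEquiv_inr {m n : ℕ} (h : m ≤ n) (x : {x : Fin n // m ≤ x.val}) :
    finSumEquiv h (.inr x) = x :=
  rfl

theorem mul_finSumEquiv {m n : ℕ} (hmn : m < n) (hm : 0 < m)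
    {ψ : {x : Fin n // m ≤ x.val} → {x : Fin n // m ≤ x.val} → Fin m}
    {mul : Fin n → Fin n → Fin n}
    (hmul : ∀ x y, mul x y = if h : m ≤ x.val ∧ m ≤ y.val then
      Fin.castLE hmn.le (ψ ⟨x, h.1⟩ ⟨y, h.2⟩) else ⟨0, by omega⟩)
    (u v : Fin m ⊕ {x : Fin n // m ≤ x.val}) :
    mul (finSumEquiv hmn.le u) (finSumEquiv hmn.le v) =
      finSumEquiv hmn.le (ZeroExtension.mul ⟨0, hm⟩ ψ u v) := by
  rcases u with b | x <;> rcases v with c | y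
  case inr.inr => simp [hmul, ZeroExtension.mul, x.2, y.2]
  all_goals simp [hmul, ZeroExtension.mul]

/-- For H(ψ), H(χ) ∈ Z_{n,m}: the semigroups are isomorphic iff there are a permutation σ
of A = {m+1,…,n} and a permutation τ of [m] fixing the zero such that
χ(σx, σy)^τ = ψ(x,y) for all x, y ∈ A.  Here {1,…,n} is Fin n, the zero is 0, [m] is
Fin m (cast into Fin n), and A = {x : Fin n | m ≤ x.val}. -/
theorem stmt15 (n m : ℕ) (hm2 : 2 ≤ m) (hmn : m ≤ n - 1)
    (ψ χ : {x : Fin n // m ≤ x.val} → {x : Fin n // m ≤ x.val} → Fin m)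
    (hψ : ∀ b : Fin m, b.val ≠ 0 → ∃ x y, ψ x y = b)
    (mulψ mulχ : Fin n → Fin n → Fin n)
    (hmulψ : ∀ x y, mulψ x y =
      if h : m ≤ x.val ∧ m ≤ y.val then
        Fin.castLE (by omega) (ψ ⟨x, h.1⟩ ⟨y, h.2⟩) else ⟨0, by omega⟩)
    (hmulχ : ∀ x y, mulχ x y =
      if h : m ≤ x.val ∧ m ≤ y.val then
        Fin.castLE (by omega) (χ ⟨x, h.1⟩ ⟨y, h.2⟩) else ⟨0, by omega⟩) :
    (∃ π : Equiv.Perm (Fin n), ∀ x y, π (mulψ x y) = mulχ (π x) (π y)) ↔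
    (∃ (σ : Equiv.Perm {x : Fin n // m ≤ x.val}) (τ : Equiv.Perm (Fin m)),
      (τ ⟨0, by omega⟩).val = 0 ∧ ∀ x y, τ (χ (σ x) (σ y)) = ψ x y) := by
  have hmn' : m < n := by omega
  have hm : 0 < m := by omega
  rw [exists_perm_hom_congr (finSumEquiv hmn'.le) (mul_finSumEquiv hmn' hm hmulψ)
    (mul_finSumEquiv hmn' hm hmulχ),
    ZeroExtension.exists_perm_mul_hom_iff fun b hb ↦ hψ b (Fin.val_ne_iff.2 hb)]
  simp only [Fin.ext_iff]
end
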